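/- arXiv:2303.05882 — 6 statements merged into one kernel-verified Lean document; each statement's English description precedes it below -/
import Mathlib

section
/- Let 0 < l₁ < l₂ < L, let c₁, c₂, ρ, α, β, γ, μ be positive reals with α₁ := α − γ²β > 0, and let d₂ : ℝ → ℝ be continuous and nonnegative on [l₁, l₂]. Suppose u, v, p, y : ℝ × ℝ → ℂ are twice continuously differentiable (in (x,t)) on [0,l₁]×[0,∞), [l₁,l₂]×[0,∞), [l₁,l₂]×[0,∞), [l₂,L]×[0,∞) respectively, and satisfy for all t ≥ 0: u_tt = c₁ u_xx on [0,l₁]; ρ v_tt − α v_xx + γβ p_xx + d₂(x) v_t = 0 and μ p_tt − β p_xx + γβ v_xx = 0 on [l₁,l₂]; y_tt = c₂ y_xx on [l₂,L]; the boundary conditions u(0,t)=0, y(L,t)=0; the continuity conditions v(l₁,t)=u(l₁,t), v(l₂,t)=y(l₂,t); and the transmission conditions α v_x(l₁,t) − γβ p_x(l₁,t) = c₁ u_x(l₁,t), α v_x(l₂,t) − γβ p_x(l₂,t) = c₂ y_x(l₂,t), p_x(l₁,t) = γ v_x(l₁,t), p_x(l₂,t) = γ v_x(l₂,t). Define E(t)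 = (1/2)∫₀^{l₁}(|u_t|² + c₁|u_x|²)dx + (1/2)∫_{l₁}^{l₂}(ρ|v_t|² + α₁|v_x|² + μ|p_t|² + β|γ v_x − p_x|²)dx + (1/2)∫_{l₂}^{L}(|y_t|² + c₂|y_x|²)dx. Then for every t > 0, E is differentiable at t and E′(t) = −∫_{l₁}^{l₂} d₂(x) |v_t(x,t)|² dx. -/
/-!
Differentiating under the integral sign and using the equations of motion, the time derivative
of each layer's energy density is the space derivative of a flux `2⟪σ, w_t⟫`, minus the
dissipation `2 d₂ |v_t|²` in the piezoelectric layer; here `σ = c uₓ` in an elastic layer, while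
`v` and `p` carry `α vₓ - γβ pₓ` and `β pₓ - γβ vₓ`. Integrating in `x`, each layer's energy rate
is its boundary flux minus its dissipation. The boundary conditions kill the fluxes at `0` and
`L`; the continuity and transmission conditions make the fluxes of adjacent layers agree at `l₁`
and `l₂` (the `p`-flux vanishes there). The mixed partials `∂ₓ w_t = ∂ₜ wₓ` that the flux
computation needs come from the fundamental theorem of calculus in `x` followed by
differentiation under the integral in `t`.
-/

open Set

/-- `f : (x, t) ↦ f x t` is twice continuously differentiable on
`[a, b] × [0, ∞)`, with partial derivatives `fx, ft, fxx, ftt, fxt`. -/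
def IsC2On (f fx ft fxx ftt fxt : ℝ → ℝ → ℂ) (a b : ℝ) : Prop :=
  (∀ x ∈ Set.Icc a b, ∀ t ∈ Set.Ici (0 : ℝ),
      HasDerivAt (fun s => f s t) (fx x t) x ∧
      HasDerivAt (fun s => f x s) (ft x t) t ∧
      HasDerivAt (fun s => fx s t) (fxx x t) x ∧
      HasDerivAt (fun s => ft x s) (ftt x t) t ∧
      HasDerivAt (fun s => fx x s) (fxt x t) t) ∧
  ContinuousOn (fun q : ℝ × ℝ => f q.1 q.2) (Set.Icc a b ×ˢ Set.Ici 0) ∧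
  ContinuousOn (fun q : ℝ × ℝ => fx q.1 q.2) (Set.Icc a b ×ˢ Set.Ici 0) ∧
  ContinuousOn (fun q : ℝ × ℝ => ft q.1 q.2) (Set.Icc a b ×ˢ Set.Ici 0) ∧
  ContinuousOn (fun q : ℝ × ℝ => fxx q.1 q.2) (Set.Icc a b ×ˢ Set.Ici 0) ∧
  ContinuousOn (fun q : ℝ × ℝ => ftt q.1 q.2) (Set.Icc a b ×ˢ Set.Ici 0) ∧
  ContinuousOn (fun q : ℝ × ℝ => fxt q.1 q.2) (Set.Icc a b ×ˢ Set.Ici 0)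

open Filter Topology intervalIntegral Metric
open scoped InnerProductSpace

section Calculus

variable {E : Type*} [NormedAddCommGroup E] [NormedSpace ℝ E]

theorem HasDerivAt.unique_of_eqOn {f g : ℝ → E} {f' g' : E} {s : Set ℝ} {t : ℝ}
    (hf : HasDerivAt f f' t) (hg : HasDerivAt g g' t) (hs : s ∈ 𝓝 t) (hfg : EqOn f g s) :
    f' = g' :=
  hf.unique (hg.congr_of_eventuallyEq (eventuallyEq_of_mem hs hfg))

theorem hasDerivAt_intervalIntegral_of_continuousOn {g g' : ℝ → ℝ → E} {a b t : ℝ}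
    {U : Set ℝ} (hab : a ≤ b) (hU : U ∈ 𝓝 t)
    (hg : ∀ x ∈ Icc a b, ∀ s ∈ U, HasDerivAt (g x ·) (g' x s) s)
    (hgc : ContinuousOn (fun q : ℝ × ℝ => g q.1 q.2) (Icc a b ×ˢ U))
    (hg'c : ContinuousOn (fun q : ℝ × ℝ => g' q.1 q.2) (Icc a b ×ˢ U)) :
    HasDerivAt (fun s => ∫ x in a..b, g x s) (∫ x in a..b, g' x t) t := by
  obtain ⟨ε, hε, hεU⟩ := nhds_basis_closedBall.mem_iff.1 hU
  have hball : ball t ε ⊆ U := ball_subset_closedBall.trans hεU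
  have hIoc : uIoc a b ⊆ Icc a b := by rw [uIoc_of_le hab]; exact Ioc_subset_Icc_self
  obtain ⟨C, hC⟩ := (isCompact_Icc.prod (isCompact_closedBall t ε)).exists_bound_of_continuousOn
    (hg'c.mono (prod_mono subset_rfl hεU))
  refine (hasDerivAt_integral_of_dominated_loc_of_deriv_le (F := fun s x => g x s)
    (F' := fun s x => g' x s) (bound := fun _ => C)
    (ball_mem_nhds t hε) ?_ ?_ ?_ ?_ intervalIntegrable_const ?_).2
  · filter_upwards [ball_mem_nhds t hε] with s hs
    exact ((hgc.uncurry_right s (hball hs)).mono hIoc).aestronglyMeasurable measurableSet_uIoc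
  · exact (hgc.uncurry_right t (mem_of_mem_nhds hU)).intervalIntegrable_of_Icc hab
  · exact ((hg'c.uncurry_right t (mem_of_mem_nhds hU)).mono hIoc).aestronglyMeasurable
      measurableSet_uIoc
  · exact .of_forall fun x hx s hs => hC (x, s) ⟨hIoc hx, ball_subset_closedBall hs⟩
  · exact .of_forall fun x hx s hs => hg x (hIoc hx) s (hball hs)

variable [CompleteSpace E]

theorem hasDerivWithinAt_mixed_partial_comm {f fx ft fxt : ℝ → ℝ → E} {a b t : ℝ}
    {U : Set ℝ} (hab : a ≤ b) (hU : U ∈ 𝓝 t)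
    (hfx : ∀ x ∈ Icc a b, ∀ s ∈ U, HasDerivAt (f · s) (fx x s) x)
    (hft : ∀ x ∈ Icc a b, HasDerivAt (f x ·) (ft x t) t)
    (hfxt : ∀ x ∈ Icc a b, ∀ s ∈ U, HasDerivAt (fx x ·) (fxt x s) s)
    (hfxc : ContinuousOn (fun q : ℝ × ℝ => fx q.1 q.2) (Icc a b ×ˢ U))
    (hfxtc : ContinuousOn (fun q : ℝ × ℝ => fxt q.1 q.2) (Icc a b ×ˢ U))
    {x : ℝ} (hx : x ∈ Icc a b) :
    HasDerivWithinAt (ft · t) (fxt x t) (Icc a b) x := by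
  have hft_eq : ∀ y ∈ Icc a b, ft y t = ft a t + ∫ ξ in a..y, fxt ξ t := by
    intro y hy
    have hsub : Icc a y ⊆ Icc a b := Icc_subset_Icc_right hy.2
    have hFTC : EqOn (fun s => f y s - f a s) (fun s => ∫ ξ in a..y, fx ξ s) U := fun s hs =>
      (integral_eq_sub_of_hasDerivAt
        (fun ξ hξ => hfx ξ (hsub (by rwa [uIcc_of_le hy.1] at hξ)) s hs)
        (((hfxc.uncurry_right s hs).mono hsub).intervalIntegrable_of_Icc hy.1)).symm
    have hdiff := ((hft y hy).sub (hft a (left_mem_Icc.2 hab))).unique_of_eqOn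
      (hasDerivAt_intervalIntegral_of_continuousOn hy.1 hU (fun ξ hξ => hfxt ξ (hsub hξ))
        (hfxc.mono (prod_mono hsub subset_rfl)) (hfxtc.mono (prod_mono hsub subset_rfl))) hU hFTC
    rw [← hdiff, add_sub_cancel]
  have hfxt_t : ContinuousOn (fxt · t) (Icc a b) := hfxtc.uncurry_right t (mem_of_mem_nhds hU)
  -- provides the `FTCFilter x (𝓝[Icc a b] x) (𝓝[Icc a b] x)` instance
  have : Fact (x ∈ Icc a b) := ⟨hx⟩
  refine ((integral_hasDerivWithinAt_right
    ((hfxt_t.mono (Icc_subset_Icc_right hx.2)).intervalIntegrable_of_Icc hx.1)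
    (hfxt_t.stronglyMeasurableAtFilter_nhdsWithin measurableSet_Icc x) (hfxt_t x hx)).const_add
    (ft a t)).congr hft_eq (hft_eq x hx)

theorem hasDerivAt_integral_of_balance_law {e e' : ℝ → ℝ → E} {F D : ℝ → E} {a b t : ℝ}
    {U : Set ℝ} (hab : a ≤ b) (hU : U ∈ 𝓝 t)
    (he : ∀ x ∈ Icc a b, ∀ s ∈ U, HasDerivAt (e x ·) (e' x s) s)
    (hec : ContinuousOn (fun q : ℝ × ℝ => e q.1 q.2) (Icc a b ×ˢ U))
    (he'c : ContinuousOn (fun q : ℝ × ℝ => e' q.1 q.2) (Icc a b ×ˢ U))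
    (hF : ∀ x ∈ Icc a b, HasDerivWithinAt F (e' x t + D x) (Icc a b) x)
    (hD : ContinuousOn D (Icc a b)) :
    HasDerivAt (fun s => ∫ x in a..b, e x s) (F b - F a - ∫ x in a..b, D x) t := by
  have he't : ContinuousOn (e' · t) (Icc a b) := he'c.uncurry_right t (mem_of_mem_nhds hU)
  have hFTC : ∫ x in a..b, (e' x t + D x) = F b - F a :=
    integral_eq_sub_of_hasDerivAt_of_le hab (fun x hx => (hF x hx).continuousWithinAt)
      (fun x hx => (hF x (Ioo_subset_Icc_self hx)).hasDerivAt (Icc_mem_nhds hx.1 hx.2))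
      ((he't.add hD).intervalIntegrable_of_Icc hab)
  rw [← hFTC, integral_add (he't.intervalIntegrable_of_Icc hab) (hD.intervalIntegrable_of_Icc hab),
    add_sub_cancel_right]
  exact hasDerivAt_intervalIntegral_of_continuousOn hab hU he hec he'c

end Calculus

theorem IsC2On.hasDerivWithinAt_ft {f fx ft fxx ftt fxt : ℝ → ℝ → ℂ} {a b t : ℝ}
    (hf : IsC2On f fx ft fxx ftt fxt a b) (hab : a ≤ b) (ht : 0 < t) {x : ℝ} (hx : x ∈ Icc a b) :
    HasDerivWithinAt (ft · t) (fxt x t) (Icc a b) x :=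
  hasDerivWithinAt_mixed_partial_comm hab (Ici_mem_nhds ht) (fun x hx s hs => (hf.1 x hx s hs).1)
    (fun x hx => (hf.1 x hx t ht.le).2.1) (fun x hx s hs => (hf.1 x hx s hs).2.2.2.2) hf.2.2.1
    hf.2.2.2.2.2.2 hx

theorem IsC2On.hasDerivAt_wave_energy {u ux ut uxx utt uxt : ℝ → ℝ → ℂ} {a b c t : ℝ}
    (hu : IsC2On u ux ut uxx utt uxt a b) (hab : a ≤ b) (ht : 0 < t)
    (hwave : ∀ x ∈ Icc a b, utt x t = (c : ℂ) * uxx x t) :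
    HasDerivAt (fun s => ∫ x in a..b, (‖ut x s‖ ^ 2 + c * ‖ux x s‖ ^ 2))
      (2 * ⟪(c : ℂ) * ux b t, ut b t⟫_ℝ - 2 * ⟪(c : ℂ) * ux a t, ut a t⟫_ℝ) t := by
  have hxt := fun x (hx : x ∈ Icc a b) => hu.hasDerivWithinAt_ft hab ht hx
  obtain ⟨hD, -, hcx, hct, -, hctt, hcxt⟩ := hu
  have := hasDerivAt_integral_of_balance_law (D := fun _ => (0 : ℝ))
    (F := fun x => 2 * ⟪(c : ℂ) * ux x t, ut x t⟫_ℝ)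
    (e := fun x s => ‖ut x s‖ ^ 2 + c * ‖ux x s‖ ^ 2)
    (e' := fun x s => 2 * ⟪ut x s, utt x s⟫_ℝ + c * (2 * ⟪ux x s, uxt x s⟫_ℝ))
    hab (Ici_mem_nhds ht)
    (fun x hx s hs => (hD x hx s hs).2.2.2.1.norm_sq.add
      ((hD x hx s hs).2.2.2.2.norm_sq.const_mul c))
    (by fun_prop) (by fun_prop) (fun x hx => ?_) continuousOn_const
  · simpa using this
  · refine ((((hD x hx t ht.le).2.2.1.hasDerivWithinAt.const_mul (c : ℂ)).inner ℝ
      (hxt x hx)).const_mul 2).congr_deriv ?_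
    rw [hwave x hx]
    simp only [← Complex.real_smul, real_inner_smul_left, real_inner_smul_right, add_zero]
    rw [real_inner_comm (ut x t)]
    ring

theorem IsC2On.hasDerivAt_piezo_energy {v vx vt vxx vtt vxt p px pt pxx ptt pxt : ℝ → ℝ → ℂ}
    {a b t ρ α β γ μ : ℝ} {d : ℝ → ℝ}
    (hv : IsC2On v vx vt vxx vtt vxt a b) (hp : IsC2On p px pt pxx ptt pxt a b)
    (hab : a ≤ b) (ht : 0 < t) (hd : ContinuousOn d (Icc a b))
    (hveq : ∀ x ∈ Icc a b, (ρ : ℂ) * vtt x t - (α : ℂ) * vxx x t +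
      ((γ * β : ℝ) : ℂ) * pxx x t + (d x : ℂ) * vt x t = 0)
    (hpeq : ∀ x ∈ Icc a b,
      (μ : ℂ) * ptt x t - (β : ℂ) * pxx x t + ((γ * β : ℝ) : ℂ) * vxx x t = 0) :
    HasDerivAt (fun s => ∫ x in a..b,
        (ρ * ‖vt x s‖ ^ 2 + (α - γ ^ 2 * β) * ‖vx x s‖ ^ 2 +
          μ * ‖pt x s‖ ^ 2 + β * ‖(γ : ℂ) * vx x s - px x s‖ ^ 2))
      ((2 * ⟪(α : ℂ) * vx b t - ((γ * β : ℝ) : ℂ) * px b t, vt b t⟫_ℝ +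
          2 * ⟪(β : ℂ) * px b t - ((γ * β : ℝ) : ℂ) * vx b t, pt b t⟫_ℝ) -
        (2 * ⟪(α : ℂ) * vx a t - ((γ * β : ℝ) : ℂ) * px a t, vt a t⟫_ℝ +
          2 * ⟪(β : ℂ) * px a t - ((γ * β : ℝ) : ℂ) * vx a t, pt a t⟫_ℝ) -
        ∫ x in a..b, 2 * (d x * ‖vt x t‖ ^ 2)) t := by
  have hvxt := fun x (hx : x ∈ Icc a b) => hv.hasDerivWithinAt_ft hab ht hx
  have hpxt := fun x (hx : x ∈ Icc a b) => hp.hasDerivWithinAt_ft hab ht hx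
  obtain ⟨hDv, -, hvcx, hvct, -, hvctt, hvcxt⟩ := hv
  obtain ⟨hDp, -, hpcx, hpct, -, hpctt, hpcxt⟩ := hp
  have hvt : ContinuousOn (vt · t) (Icc a b) := hvct.uncurry_right t ht.le
  refine hasDerivAt_integral_of_balance_law
    (e := fun x s => ρ * ‖vt x s‖ ^ 2 + (α - γ ^ 2 * β) * ‖vx x s‖ ^ 2 +
      μ * ‖pt x s‖ ^ 2 + β * ‖(γ : ℂ) * vx x s - px x s‖ ^ 2)
    (e' := fun x s => ρ * (2 * ⟪vt x s, vtt x s⟫_ℝ) + (α - γ ^ 2 * β) * (2 * ⟪vx x s, vxt x s⟫_ℝ) +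
      μ * (2 * ⟪pt x s, ptt x s⟫_ℝ) +
      β * (2 * ⟪(γ : ℂ) * vx x s - px x s, (γ : ℂ) * vxt x s - pxt x s⟫_ℝ))
    (F := fun x => 2 * ⟪(α : ℂ) * vx x t - ((γ * β : ℝ) : ℂ) * px x t, vt x t⟫_ℝ +
      2 * ⟪(β : ℂ) * px x t - ((γ * β : ℝ) : ℂ) * vx x t, pt x t⟫_ℝ)
    hab (Ici_mem_nhds ht) (fun x hx s hs => ?_) (by fun_prop) (by fun_prop) (fun x hx => ?_)
    (by fun_prop)
  · obtain ⟨-, -, -, hvtt, hvxt'⟩ := hDv x hx s hs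
    obtain ⟨-, -, -, hptt, hpxt'⟩ := hDp x hx s hs
    exact (((hvtt.norm_sq.const_mul ρ).add (hvxt'.norm_sq.const_mul _)).add
      (hptt.norm_sq.const_mul μ)).add (((hvxt'.const_mul (γ : ℂ)).sub hpxt').norm_sq.const_mul β)
  · obtain ⟨-, -, hvxx, -, -⟩ := hDv x hx t ht.le
    obtain ⟨-, -, hpxx, -, -⟩ := hDp x hx t ht.le
    have hA := (hvxx.const_mul (α : ℂ)).sub (hpxx.const_mul ((γ * β : ℝ) : ℂ))
    have hB := (hpxx.const_mul (β : ℂ)).sub (hvxx.const_mul ((γ * β : ℝ) : ℂ))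
    refine (((hA.hasDerivWithinAt.inner ℝ (hvxt x hx)).const_mul 2).add
      ((hB.hasDerivWithinAt.inner ℝ (hpxt x hx)).const_mul 2)).congr_deriv ?_
    have e1 := congrArg (⟪·, vt x t⟫_ℝ) (hveq x hx)
    have e2 := congrArg (⟪·, pt x t⟫_ℝ) (hpeq x hx)
    simp only [Pi.sub_apply, ← Complex.real_smul, inner_add_left, inner_sub_left, inner_sub_right,
      real_inner_smul_left, real_inner_smul_right, inner_zero_left, real_inner_self_eq_norm_sq]
      at e1 e2 ⊢
    rw [real_inner_comm (vtt x t), real_inner_comm (ptt x t)]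
    linear_combination (-2) * e1 + (-2) * e2

theorem stmt0_general (l₁ l₂ L c₁ c₂ ρ α β γ μ : ℝ)
    (hl₁ : 0 < l₁) (hl₁₂ : l₁ < l₂) (hl₂L : l₂ < L)
    (d₂ : ℝ → ℝ) (hd₂c : ContinuousOn d₂ (Icc l₁ l₂))
    (u ux ut uxx utt uxt : ℝ → ℝ → ℂ)
    (v vx vt vxx vtt vxt : ℝ → ℝ → ℂ)
    (p px pt pxx ptt pxt : ℝ → ℝ → ℂ)
    (y yx yt yxx ytt yxt : ℝ → ℝ → ℂ)
    (hu : IsC2On u ux ut uxx utt uxt 0 l₁)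
    (hv : IsC2On v vx vt vxx vtt vxt l₁ l₂)
    (hp : IsC2On p px pt pxx ptt pxt l₁ l₂)
    (hy : IsC2On y yx yt yxx ytt yxt l₂ L)
    -- the four PDEs
    (hueq : ∀ t ∈ Ici (0 : ℝ), ∀ x ∈ Icc (0 : ℝ) l₁,
      utt x t = (c₁ : ℂ) * uxx x t)
    (hveq : ∀ t ∈ Ici (0 : ℝ), ∀ x ∈ Icc l₁ l₂,
      (ρ : ℂ) * vtt x t - (α : ℂ) * vxx x t + ((γ * β : ℝ) : ℂ) * pxx x t +
        (d₂ x : ℂ) * vt x t = 0)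
    (hpeq : ∀ t ∈ Ici (0 : ℝ), ∀ x ∈ Icc l₁ l₂,
      (μ : ℂ) * ptt x t - (β : ℂ) * pxx x t + ((γ * β : ℝ) : ℂ) * vxx x t = 0)
    (hyeq : ∀ t ∈ Ici (0 : ℝ), ∀ x ∈ Icc l₂ L,
      ytt x t = (c₂ : ℂ) * yxx x t)
    -- boundary conditions
    (hbc0 : ∀ t ∈ Ici (0 : ℝ), u 0 t = 0)
    (hbcL : ∀ t ∈ Ici (0 : ℝ), y L t = 0)
    -- continuity conditions
    (hct1 : ∀ t ∈ Ici (0 : ℝ), v l₁ t = u l₁ t)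
    (hct2 : ∀ t ∈ Ici (0 : ℝ), v l₂ t = y l₂ t)
    -- transmission conditions
    (htr1 : ∀ t ∈ Ici (0 : ℝ),
      (α : ℂ) * vx l₁ t - ((γ * β : ℝ) : ℂ) * px l₁ t = (c₁ : ℂ) * ux l₁ t)
    (htr2 : ∀ t ∈ Ici (0 : ℝ),
      (α : ℂ) * vx l₂ t - ((γ * β : ℝ) : ℂ) * px l₂ t = (c₂ : ℂ) * yx l₂ t)
    (htr3 : ∀ t ∈ Ici (0 : ℝ), px l₁ t = (γ : ℂ) * vx l₁ t)
    (htr4 : ∀ t ∈ Ici (0 : ℝ), px l₂ t = (γ : ℂ) * vx l₂ t) :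
    ∀ t > (0 : ℝ), HasDerivAt
      (fun s : ℝ =>
        (1 / 2) * (∫ x in (0 : ℝ)..l₁, (‖ut x s‖ ^ 2 + c₁ * ‖ux x s‖ ^ 2)) +
        (1 / 2) * (∫ x in l₁..l₂,
          (ρ * ‖vt x s‖ ^ 2 + (α - γ ^ 2 * β) * ‖vx x s‖ ^ 2 +
            μ * ‖pt x s‖ ^ 2 + β * ‖(γ : ℂ) * vx x s - px x s‖ ^ 2)) +
        (1 / 2) * (∫ x in l₂..L, (‖yt x s‖ ^ 2 + c₂ * ‖yx x s‖ ^ 2)))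
      (-(∫ x in l₁..l₂, d₂ x * ‖vt x t‖ ^ 2)) t := by
  intro t ht
  have hU : Ici (0 : ℝ) ∈ 𝓝 t := Ici_mem_nhds ht
  have hut0 : ut 0 t = 0 := ((hu.1 0 ⟨le_rfl, hl₁.le⟩ t ht.le).2.1).unique_of_eqOn
    (hasDerivAt_const t 0) hU hbc0
  have hytL : yt L t = 0 := ((hy.1 L ⟨hl₂L.le, le_rfl⟩ t ht.le).2.1).unique_of_eqOn
    (hasDerivAt_const t 0) hU hbcL
  have hvt₁ : vt l₁ t = ut l₁ t := ((hv.1 l₁ ⟨le_rfl, hl₁₂.le⟩ t ht.le).2.1).unique_of_eqOn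
    (hu.1 l₁ ⟨hl₁.le, le_rfl⟩ t ht.le).2.1 hU hct1
  have hvt₂ : vt l₂ t = yt l₂ t := ((hv.1 l₂ ⟨hl₁₂.le, le_rfl⟩ t ht.le).2.1).unique_of_eqOn
    (hy.1 l₂ ⟨le_rfl, hl₂L.le⟩ t ht.le).2.1 hU hct2
  have hpx₁ : (β : ℂ) * px l₁ t - ((γ * β : ℝ) : ℂ) * vx l₁ t = 0 := by
    rw [htr3 t ht.le]; push_cast; ring
  have hpx₂ : (β : ℂ) * px l₂ t - ((γ * β : ℝ) : ℂ) * vx l₂ t = 0 := by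
    rw [htr4 t ht.le]; push_cast; ring
  have hEu := hu.hasDerivAt_wave_energy hl₁.le ht (hueq t ht.le)
  have hEvp := hv.hasDerivAt_piezo_energy hp hl₁₂.le ht hd₂c (hveq t ht.le) (hpeq t ht.le)
  have hEy := hy.hasDerivAt_wave_energy hl₂L.le ht (hyeq t ht.le)
  refine (((hEu.const_mul (1 / 2)).add (hEvp.const_mul (1 / 2))).add
    (hEy.const_mul (1 / 2))).congr_deriv ?_
  rw [hut0, hytL, hvt₁, hvt₂, htr1 t ht.le, htr2 t ht.le, hpx₁, hpx₂,
    intervalIntegral.integral_const_mul]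
  simp only [inner_zero_left, inner_zero_right]
  ring

/-- (Lemma 2.1) Energy dissipation identity for the
serially-connected Elastic–Piezoelectric–Elastic transmission system with a
local viscous damping `d₂` acting only on the piezoelectric middle layer:
`E'(t) = -∫_{l₁}^{l₂} d₂(x) |v_t(x,t)|² dx` for every `t > 0`. -/
theorem stmt0 (l₁ l₂ L c₁ c₂ ρ α β γ μ : ℝ)
    (hl₁ : 0 < l₁) (hl₁₂ : l₁ < l₂) (hl₂L : l₂ < L)
    (hc₁ : 0 < c₁) (hc₂ : 0 < c₂) (hρ : 0 < ρ) (hα : 0 < α) (hβ : 0 < β)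
    (hγ : 0 < γ) (hμ : 0 < μ) (hα₁ : 0 < α - γ ^ 2 * β)
    (d₂ : ℝ → ℝ) (hd₂c : ContinuousOn d₂ (Icc l₁ l₂))
    (hd₂0 : ∀ x ∈ Icc l₁ l₂, 0 ≤ d₂ x)
    (u ux ut uxx utt uxt : ℝ → ℝ → ℂ)
    (v vx vt vxx vtt vxt : ℝ → ℝ → ℂ)
    (p px pt pxx ptt pxt : ℝ → ℝ → ℂ)
    (y yx yt yxx ytt yxt : ℝ → ℝ → ℂ)
    (hu : IsC2On u ux ut uxx utt uxt 0 l₁)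
    (hv : IsC2On v vx vt vxx vtt vxt l₁ l₂)
    (hp : IsC2On p px pt pxx ptt pxt l₁ l₂)
    (hy : IsC2On y yx yt yxx ytt yxt l₂ L)
    -- the four PDEs
    (hueq : ∀ t ∈ Ici (0 : ℝ), ∀ x ∈ Icc (0 : ℝ) l₁,
      utt x t = (c₁ : ℂ) * uxx x t)
    (hveq : ∀ t ∈ Ici (0 : ℝ), ∀ x ∈ Icc l₁ l₂,
      (ρ : ℂ) * vtt x t - (α : ℂ) * vxx x t + ((γ * β : ℝ) : ℂ) * pxx x t +
        (d₂ x : ℂ) * vt x t = 0)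
    (hpeq : ∀ t ∈ Ici (0 : ℝ), ∀ x ∈ Icc l₁ l₂,
      (μ : ℂ) * ptt x t - (β : ℂ) * pxx x t + ((γ * β : ℝ) : ℂ) * vxx x t = 0)
    (hyeq : ∀ t ∈ Ici (0 : ℝ), ∀ x ∈ Icc l₂ L,
      ytt x t = (c₂ : ℂ) * yxx x t)
    -- boundary conditions
    (hbc0 : ∀ t ∈ Ici (0 : ℝ), u 0 t = 0)
    (hbcL : ∀ t ∈ Ici (0 : ℝ), y L t = 0)
    -- continuity conditions
    (hct1 : ∀ t ∈ Ici (0 : ℝ), v l₁ t = u l₁ t)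
    (hct2 : ∀ t ∈ Ici (0 : ℝ), v l₂ t = y l₂ t)
    -- transmission conditions
    (htr1 : ∀ t ∈ Ici (0 : ℝ),
      (α : ℂ) * vx l₁ t - ((γ * β : ℝ) : ℂ) * px l₁ t = (c₁ : ℂ) * ux l₁ t)
    (htr2 : ∀ t ∈ Ici (0 : ℝ),
      (α : ℂ) * vx l₂ t - ((γ * β : ℝ) : ℂ) * px l₂ t = (c₂ : ℂ) * yx l₂ t)
    (htr3 : ∀ t ∈ Ici (0 : ℝ), px l₁ t = (γ : ℂ) * vx l₁ t)
    (htr4 : ∀ t ∈ Ici (0 : ℝ), px l₂ t = (γ : ℂ) * vx l₂ t) :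
    ∀ t > (0 : ℝ), HasDerivAt
      (fun s : ℝ =>
        (1 / 2) * (∫ x in (0 : ℝ)..l₁, (‖ut x s‖ ^ 2 + c₁ * ‖ux x s‖ ^ 2)) +
        (1 / 2) * (∫ x in l₁..l₂,
          (ρ * ‖vt x s‖ ^ 2 + (α - γ ^ 2 * β) * ‖vx x s‖ ^ 2 +
            μ * ‖pt x s‖ ^ 2 + β * ‖(γ : ℂ) * vx x s - px x s‖ ^ 2)) +
        (1 / 2) * (∫ x in l₂..L, (‖yt x s‖ ^ 2 + c₂ * ‖yx x s‖ ^ 2)))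
      (-(∫ x in l₁..l₂, d₂ x * ‖vt x t‖ ^ 2)) t :=
  stmt0_general l₁ l₂ L c₁ c₂ ρ α β γ μ hl₁ hl₁₂ hl₂L d₂ hd₂c u ux ut uxx utt uxt v vx vt vxx vtt
    vxt p px pt pxx ptt pxt y yx yt yxx ytt yxt hu hv hp hy hueq hveq hpeq hyeq hbc0 hbcL hct1 hct2
    htr1 htr2 htr3 htr4
end

section
/- Let 0 < l₁ < l₂ be reals. Let u : ℝ → ℂ be continuously differentiable on [0, l₁] with u(0) = 0 and let v : ℝ → ℂ be continuously differentiable on [l₁, l₂] with v(l₁) = u(l₁). Then ∫_{l₁}^{l₂} |v(x)|² dx ≤ 2(l₂ − l₁) · max(l₁, l₂ − l₁) · ( ∫₀^{l₁} |u′(x)|² dx + ∫_{l₁}^{l₂} |v′(x)|² dx ). -/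
open Set

/-
Both `u(l₁) = u(l₁) - u(0)` and `v(x) - v(l₁)` are integrals of a derivative, so by Cauchy–Schwarz
`|v(x)|² ≤ 2 (|u(l₁) - u(0)|² + |v(x) - v(l₁)|²) ≤ 2 (l₁ ∫|u'|² + (l₂ - l₁) ∫|v'|²)` for every
`x ∈ [l₁, l₂]`; integrating this uniform bound over `[l₁, l₂]` gives the estimate.
-/

open intervalIntegral
open MeasureTheory (volume ae_of_all)

/-- The discriminant of the nonnegative quadratic `t ↦ ∫ (g - t)²` is nonpositive. -/
theorem sq_intervalIntegral_le {a b : ℝ} (hab : a ≤ b) {g : ℝ → ℝ} (hg : ContinuousOn g (Icc a b)) :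
    (∫ x in a..b, g x) ^ 2 ≤ (b - a) * ∫ x in a..b, g x ^ 2 := by
  have hgi : IntervalIntegrable g volume a b :=
    hg.intervalIntegrable_of_Icc hab
  have hg2i : IntervalIntegrable (fun x => g x ^ 2) volume a b :=
    (hg.pow 2).intervalIntegrable_of_Icc hab
  have hquad : ∀ t : ℝ, 0 ≤ (b - a) * (t * t) + (-2 * ∫ x in a..b, g x) * t
      + ∫ x in a..b, g x ^ 2 := by
    intro t
    have hexp : (∫ x in a..b, (g x - t) ^ 2)
        = (∫ x in a..b, g x ^ 2) - 2 * t * (∫ x in a..b, g x) + (b - a) * t ^ 2 := by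
      simp only [sub_sq]
      rw [integral_add (hg2i.sub (hgi.const_mul _ |>.mul_const _)) intervalIntegrable_const,
        integral_sub hg2i ((hgi.const_mul _).mul_const _), integral_mul_const, integral_const_mul,
        integral_const, smul_eq_mul]
      ring
    have : 0 ≤ ∫ x in a..b, (g x - t) ^ 2 := integral_nonneg hab fun x _ => sq_nonneg _
    linarith
  have hdisc := discrim_le_zero hquad
  rw [discrim] at hdisc
  linarith

section NormedSpace

variable {E : Type*} [NormedAddCommGroup E] [NormedSpace ℝ E]

theorem sq_norm_intervalIntegral_le {a b : ℝ} (hab : a ≤ b) {f : ℝ → E}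
    (hf : ContinuousOn f (Icc a b)) :
    ‖∫ x in a..b, f x‖ ^ 2 ≤ (b - a) * ∫ x in a..b, ‖f x‖ ^ 2 :=
  (pow_le_pow_left₀ (norm_nonneg _) (norm_integral_le_integral_norm hab) 2).trans
    (sq_intervalIntegral_le hab hf.norm)

theorem sq_norm_sub_le_mul_integral_sq_norm_deriv [CompleteSpace E] {a b x : ℝ} (hx : x ∈ Icc a b)
    {w w' : ℝ → E}
    (hw : ∀ t ∈ Icc a b, HasDerivAt w (w' t) t) (hw' : ContinuousOn w' (Icc a b)) :
    ‖w x - w a‖ ^ 2 ≤ (b - a) * ∫ t in a..b, ‖w' t‖ ^ 2 := by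
  have hsub : Icc a x ⊆ Icc a b := Icc_subset_Icc_right hx.2
  have hftc : ∫ t in a..x, w' t = w x - w a :=
    integral_eq_sub_of_hasDerivAt (fun t ht => hw t (hsub (uIcc_of_le hx.1 ▸ ht)))
      ((hw'.mono hsub).intervalIntegrable_of_Icc hx.1)
  have hmono : ∫ t in a..x, ‖w' t‖ ^ 2 ≤ ∫ t in a..b, ‖w' t‖ ^ 2 :=
    integral_mono_interval le_rfl hx.1 hx.2 (ae_of_all _ fun t => sq_nonneg _)
      ((hw'.norm.pow 2).intervalIntegrable_of_Icc (hx.1.trans hx.2))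
  calc ‖w x - w a‖ ^ 2 ≤ (x - a) * ∫ t in a..x, ‖w' t‖ ^ 2 :=
        hftc ▸ sq_norm_intervalIntegral_le hx.1 (hw'.mono hsub)
    _ ≤ (b - a) * ∫ t in a..b, ‖w' t‖ ^ 2 :=
        mul_le_mul (by linarith [hx.2]) hmono (integral_nonneg hx.1 fun t _ => sq_nonneg _)
          (by linarith [hx.1, hx.2])

end NormedSpace

/-- (Equation (2.9)) Poincaré-type estimate: the `L²` norm of
`v` on `[l₁, l₂]` is controlled by the `L²` norms of `u'` and `v'`, using
`u(0) = 0` and `v(l₁) = u(l₁)`. -/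
theorem stmt2 (l₁ l₂ : ℝ) (hl₁ : 0 < l₁) (hl₁₂ : l₁ < l₂)
    (u u' v v' : ℝ → ℂ)
    (hu : ∀ x ∈ Icc (0 : ℝ) l₁, HasDerivAt u (u' x) x)
    (hu' : ContinuousOn u' (Icc 0 l₁))
    (hv : ∀ x ∈ Icc l₁ l₂, HasDerivAt v (v' x) x)
    (hv' : ContinuousOn v' (Icc l₁ l₂))
    (hu0 : u 0 = 0) (hcont : v l₁ = u l₁) :
    (∫ x in l₁..l₂, ‖v x‖ ^ 2) ≤ 2 * (l₂ - l₁) * max l₁ (l₂ - l₁) *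
      ((∫ x in (0 : ℝ)..l₁, ‖u' x‖ ^ 2) + ∫ x in l₁..l₂, ‖v' x‖ ^ 2) := by
  set A := ∫ x in (0 : ℝ)..l₁, ‖u' x‖ ^ 2
  set B := ∫ x in l₁..l₂, ‖v' x‖ ^ 2
  have hA : 0 ≤ A := integral_nonneg hl₁.le fun x _ => sq_nonneg _
  have hB : 0 ≤ B := integral_nonneg hl₁₂.le fun x _ => sq_nonneg _
  have hU : ‖u l₁ - u 0‖ ^ 2 ≤ (l₁ - 0) * A :=
    sq_norm_sub_le_mul_integral_sq_norm_deriv (right_mem_Icc.2 hl₁.le) hu hu'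
  have hpt : ∀ x ∈ Icc l₁ l₂, ‖v x‖ ^ 2 ≤ 2 * max l₁ (l₂ - l₁) * (A + B) := by
    intro x hx
    have hV : ‖v x - v l₁‖ ^ 2 ≤ (l₂ - l₁) * B :=
      sq_norm_sub_le_mul_integral_sq_norm_deriv hx hv hv'
    have hAmax := mul_le_mul_of_nonneg_right (le_max_left l₁ (l₂ - l₁)) hA
    have hBmax := mul_le_mul_of_nonneg_right (le_max_right l₁ (l₂ - l₁)) hB
    calc ‖v x‖ ^ 2 = ‖(u l₁ - u 0) + (v x - v l₁)‖ ^ 2 := by rw [hu0, hcont]; ring_nf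
      _ ≤ (‖u l₁ - u 0‖ + ‖v x - v l₁‖) ^ 2 :=
          pow_le_pow_left₀ (norm_nonneg _) (norm_add_le _ _) 2
      _ ≤ 2 * (‖u l₁ - u 0‖ ^ 2 + ‖v x - v l₁‖ ^ 2) := add_sq_le
      _ ≤ 2 * max l₁ (l₂ - l₁) * (A + B) := by linarith
  have hvc : ContinuousOn v (Icc l₁ l₂) := fun x hx => (hv x hx).continuousAt.continuousWithinAt
  calc (∫ x in l₁..l₂, ‖v x‖ ^ 2) ≤ ∫ _ in l₁..l₂, 2 * max l₁ (l₂ - l₁) * (A + B) :=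
        integral_mono_on hl₁₂.le ((hvc.norm.pow 2).intervalIntegrable_of_Icc hl₁₂.le)
          intervalIntegrable_const hpt
    _ = 2 * (l₂ - l₁) * max l₁ (l₂ - l₁) * (A + B) := by rw [integral_const, smul_eq_mul]; ring
end

section
/- Let 0 < l₁ < l₂ < L and let c₁, c₂, ρ, α, β, γ, μ be positive reals with α₁ := α − γ²β > 0. Then there exist positive constants C₁ and C₂, depending only on l₁, l₂, L, c₁, c₂, ρ, α, β, γ, μ, such that for every tuple (u, u¹, v, z, p, q, y, y¹) where u is continuously differentiable on [0,l₁] with u(0)=0, v and p are continuously differentiable on [l₁,l₂], y is continuously differentiable on [l₂,L] with y(L)=0, u¹, z, q, y¹ are continuous on the respective intervals, and u(l₁)=v(l₁), y(l₂)=v(l₂), one has C₁‖U‖_s² ≤ ‖U‖_𝓗² ≤ C₂‖U‖_s², where ‖U‖_𝓗² = ∫₀^{l₁}(c₁|u′|² + |u¹|²) + ∫_{l₁}^{l₂}(α₁|v′|² + ρ|z|² + β|γ v′ − p′|² + μ|q|²) + ∫_{l₂}^{L}(c₂|y′|² + |y¹|²) and ‖U‖_s² = ∫₀^{l₁}|u′|²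 + ∫₀^{l₁}|u¹|² + ∫_{l₁}^{l₂}|v′|² + ∫_{l₁}^{l₂}|v|² + ∫_{l₁}^{l₂}|z|² + ∫_{l₁}^{l₂}|p′|² + ∫_{l₁}^{l₂}|q|² + ∫_{l₂}^{L}|y′|² + ∫_{l₂}^{L}|y¹|². -/
/-!
The upper bound only needs the coupling term to be controlled, via
`‖γ v' - p'‖² ≤ 2γ²‖v'‖² + 2‖p'‖²`. For the lower bound, the two terms of `‖U‖_s` that the
energy does not contain are `∫‖p'‖²` and `∫‖v‖²`. The first is controlled through
`p' = γ v' - (γ v' - p')`, using `α₁ > 0`. For the second, the clamping `u(0) = 0` and the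
continuity `u(l₁) = v(l₁)` give `v(s) = (u(l₁) - u(0)) + (v(s) - v(l₁))`; the fundamental theorem
of calculus and Cauchy–Schwarz then yield a Poincaré inequality bounding `∫‖v‖²` by `∫‖u'‖²` and
`∫‖v'‖²`. What remains compares positive combinations of nonnegative numbers.
-/

open Set intervalIntegral

section
variable {a b : ℝ}

theorem sq_intervalIntegral_le_mul_integral_sq (hab : a ≤ b) {f : ℝ → ℝ}
    (hf : ContinuousOn f (Icc a b)) :
    (∫ x in a..b, f x) ^ 2 ≤ (b - a) * ∫ x in a..b, f x ^ 2 := by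
  rcases hab.eq_or_lt with rfl | hlt
  · simp
  have hf₁ : IntervalIntegrable f MeasureTheory.volume a b := hf.intervalIntegrable_of_Icc hab
  have hf₂ : IntervalIntegrable (f · ^ 2) MeasureTheory.volume a b :=
    (hf.pow 2).intervalIntegrable_of_Icc hab
  obtain ⟨I, hI⟩ : ∃ I, ∫ x in a..b, f x = I := ⟨_, rfl⟩
  have expand : ∫ x in a..b, ((b - a) * f x - I) ^ 2
      = (b - a) * ((b - a) * (∫ x in a..b, f x ^ 2) - I ^ 2) := by
    have h : ∀ x, ((b - a) * f x - I) ^ 2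
        = (b - a) ^ 2 * f x ^ 2 - 2 * (b - a) * I * f x + I ^ 2 := fun x => by ring
    simp_rw [h]
    rw [integral_add ((hf₂.const_mul _).sub (hf₁.const_mul _)) intervalIntegrable_const,
      integral_sub (hf₂.const_mul _) (hf₁.const_mul _), integral_const_mul, integral_const_mul,
      integral_const, smul_eq_mul, hI]
    ring
  have hvar : 0 ≤ ∫ x in a..b, ((b - a) * f x - I) ^ 2 :=
    integral_nonneg hab fun _ _ => sq_nonneg _
  rw [expand] at hvar
  rw [hI]
  exact sub_nonneg.1 ((mul_nonneg_iff_of_pos_left (sub_pos.2 hlt)).1 hvar)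

theorem norm_sub_sq_le_two_mul {E : Type*} [SeminormedAddCommGroup E] (x y : E) :
    ‖x - y‖ ^ 2 ≤ 2 * (‖x‖ ^ 2 + ‖y‖ ^ 2) :=
  (pow_le_pow_left₀ (norm_nonneg _) (norm_sub_le x y) 2).trans add_sq_le

variable {E : Type*} [NormedAddCommGroup E] [NormedSpace ℝ E] [CompleteSpace E]

theorem norm_sub_sq_le_mul_integral_norm_deriv_sq {f f' : ℝ → E}
    (hf : ∀ x ∈ Icc a b, HasDerivAt f (f' x) x) (hf' : ContinuousOn f' (Icc a b))
    {s : ℝ} (hs : s ∈ Icc a b) :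
    ‖f s - f a‖ ^ 2 ≤ (b - a) * ∫ x in a..b, ‖f' x‖ ^ 2 := by
  have hab : a ≤ b := hs.1.trans hs.2
  have hftc : ∫ x in a..s, f' x = f s - f a :=
    integral_eq_sub_of_hasDerivAt (fun x hx => hf x (by
      rw [uIcc_of_le hs.1] at hx; exact ⟨hx.1, hx.2.trans hs.2⟩))
      ((hf'.mono (Icc_subset_Icc le_rfl hs.2)).intervalIntegrable_of_Icc hs.1)
  have hle : ‖f s - f a‖ ≤ ∫ x in a..b, ‖f' x‖ := calc
    ‖f s - f a‖ = ‖∫ x in a..s, f' x‖ := by rw [hftc]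
    _ ≤ ∫ x in a..s, ‖f' x‖ := norm_integral_le_integral_norm hs.1
    _ ≤ ∫ x in a..b, ‖f' x‖ := integral_mono_interval le_rfl hs.1 hs.2
        (Filter.Eventually.of_forall fun _ => norm_nonneg _)
        (hf'.norm.intervalIntegrable_of_Icc hab)
  exact (pow_le_pow_left₀ (norm_nonneg _) hle 2).trans
    (sq_intervalIntegral_le_mul_integral_sq hab hf'.norm)

theorem integral_norm_sq_le_of_clamped {c : ℝ} {u u' v v' : ℝ → E} (hab : a ≤ b) (hbc : b ≤ c)
    (hu : ∀ x ∈ Icc a b, HasDerivAt u (u' x) x) (hu' : ContinuousOn u' (Icc a b))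
    (hv : ∀ x ∈ Icc b c, HasDerivAt v (v' x) x) (hv' : ContinuousOn v' (Icc b c))
    (hua : u a = 0) (huv : u b = v b) :
    ∫ x in b..c, ‖v x‖ ^ 2 ≤
      2 * (c - b) * (b - a) * (∫ x in a..b, ‖u' x‖ ^ 2) +
        2 * (c - b) ^ 2 * ∫ x in b..c, ‖v' x‖ ^ 2 := by
  have hvc : ContinuousOn v (Icc b c) := fun x hx => (hv x hx).continuousAt.continuousWithinAt
  have hpt : ∀ s ∈ Icc b c, ‖v s‖ ^ 2 ≤
      2 * ((b - a) * (∫ x in a..b, ‖u' x‖ ^ 2) + (c - b) * ∫ x in b..c, ‖v' x‖ ^ 2) := by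
    intro s hs
    have hvs : v s = (u b - u a) - (v b - v s) := by rw [hua, huv]; abel
    rw [hvs]
    refine (norm_sub_sq_le_two_mul _ _).trans ?_
    rw [norm_sub_rev (v b)]
    gcongr
    · exact norm_sub_sq_le_mul_integral_norm_deriv_sq hu hu' (right_mem_Icc.2 hab)
    · exact norm_sub_sq_le_mul_integral_norm_deriv_sq hv hv' hs
  calc ∫ x in b..c, ‖v x‖ ^ 2
      ≤ ∫ _ in b..c, 2 * ((b - a) * (∫ x in a..b, ‖u' x‖ ^ 2) + (c - b) * ∫ x in b..c, ‖v' x‖ ^ 2) :=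
        integral_mono_on hbc ((hvc.norm.pow 2).intervalIntegrable_of_Icc hbc)
          intervalIntegrable_const hpt
    _ = _ := by rw [integral_const, smul_eq_mul]; ring

theorem integral_norm_ofReal_mul_sub_sq_le (γ : ℝ) {f g : ℝ → ℂ} (hab : a ≤ b)
    (hf : ContinuousOn f (Icc a b)) (hg : ContinuousOn g (Icc a b)) :
    ∫ x in a..b, ‖(γ : ℂ) * f x - g x‖ ^ 2 ≤
      2 * γ ^ 2 * (∫ x in a..b, ‖f x‖ ^ 2) + 2 * ∫ x in a..b, ‖g x‖ ^ 2 := by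
  have hf₂ : IntervalIntegrable (‖f ·‖ ^ 2) MeasureTheory.volume a b :=
    (hf.norm.pow 2).intervalIntegrable_of_Icc hab
  have hg₂ : IntervalIntegrable (‖g ·‖ ^ 2) MeasureTheory.volume a b :=
    (hg.norm.pow 2).intervalIntegrable_of_Icc hab
  calc ∫ x in a..b, ‖(γ : ℂ) * f x - g x‖ ^ 2
      ≤ ∫ x in a..b, (2 * γ ^ 2 * ‖f x‖ ^ 2 + 2 * ‖g x‖ ^ 2) :=
        integral_mono_on hab
          ((((continuousOn_const.mul hf).sub hg).norm.pow 2).intervalIntegrable_of_Icc hab)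
          ((hf₂.const_mul _).add (hg₂.const_mul _)) fun x _ => by
            have := norm_sub_sq_le_two_mul ((γ : ℂ) * f x) (g x)
            rw [norm_mul, Complex.norm_real, Real.norm_eq_abs, mul_pow, sq_abs] at this
            linarith
    _ = _ := by rw [integral_add (hf₂.const_mul _) (hg₂.const_mul _), integral_const_mul,
          integral_const_mul]

theorem integral_norm_sq_le_of_ofReal_mul_sub (γ : ℝ) {f g : ℝ → ℂ} (hab : a ≤ b)
    (hf : ContinuousOn f (Icc a b)) (hg : ContinuousOn g (Icc a b)) :
    ∫ x in a..b, ‖g x‖ ^ 2 ≤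
      2 * γ ^ 2 * (∫ x in a..b, ‖f x‖ ^ 2) + 2 * ∫ x in a..b, ‖(γ : ℂ) * f x - g x‖ ^ 2 := by
  simpa only [sub_sub_cancel] using
    integral_norm_ofReal_mul_sub_sq_le γ (g := fun x => (γ : ℂ) * f x - g x) hab hf
      ((continuousOn_const.mul hf).sub hg)

end

/- In the next two lemmas `A, A₁, B, V, Z, P, Q, W, Y, Y₁` stand for the integrals of
`‖u'‖², ‖u¹‖², ‖v'‖², ‖v‖², ‖z‖², ‖p'‖², ‖q‖², ‖γ v' - p'‖², ‖y'‖², ‖y¹‖²`. -/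
theorem exists_pos_mul_le_energy {c₁ c₂ ρ α₁ β μ k k₁ k₂ : ℝ} (hc₁ : 0 < c₁) (hc₂ : 0 < c₂)
    (hρ : 0 < ρ) (hα₁ : 0 < α₁) (hβ : 0 < β) (hμ : 0 < μ)
    (hk : 0 ≤ k) (hk₁ : 0 ≤ k₁) (hk₂ : 0 ≤ k₂) :
    ∃ C > 0, ∀ A A₁ B V Z P Q W Y Y₁ : ℝ, 0 ≤ A → 0 ≤ A₁ → 0 ≤ B → 0 ≤ Z → 0 ≤ Q → 0 ≤ W →
      0 ≤ Y → 0 ≤ Y₁ → V ≤ k₁ * A + k₂ * B → P ≤ k * B + 2 * W →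
      C * (A + A₁ + B + V + Z + P + Q + Y + Y₁) ≤
        (c₁ * A + A₁) + (α₁ * B + ρ * Z + β * W + μ * Q) + (c₂ * Y + Y₁) := by
  set m := min (min (min c₁ 1) (min α₁ ρ)) (min (min β μ) c₂)
  set K := 2 + k + k₁ + k₂
  refine ⟨m / K, by positivity, fun A A₁ B V Z P Q W Y Y₁ hA hA₁ hB hZ hQ hW hY hY₁ hV hP => ?_⟩
  have hS : A + A₁ + B + V + Z + P + Q + Y + Y₁ ≤ K * (A + A₁ + B + Z + W + Q + Y + Y₁) := by
    nlinarith
  have hm : m ≤ c₁ ∧ m ≤ 1 ∧ m ≤ α₁ ∧ m ≤ ρ ∧ m ≤ β ∧ m ≤ μ ∧ m ≤ c₂ := by simp [m]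
  obtain ⟨h₁, h₂, h₃, h₄, h₅, h₆, h₇⟩ := hm
  have hE : m * (A + A₁ + B + Z + W + Q + Y + Y₁) ≤
      (c₁ * A + A₁) + (α₁ * B + ρ * Z + β * W + μ * Q) + (c₂ * Y + Y₁) := by
    nlinarith
  calc m / K * (A + A₁ + B + V + Z + P + Q + Y + Y₁)
      ≤ m / K * (K * (A + A₁ + B + Z + W + Q + Y + Y₁)) := by gcongr
    _ = m * (A + A₁ + B + Z + W + Q + Y + Y₁) := by
      rw [← mul_assoc, div_mul_cancel₀ m (by positivity)]
    _ ≤ _ := hE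

theorem exists_energy_le_mul {c₁ c₂ ρ α₁ β μ k : ℝ} (hβ : 0 ≤ β) :
    ∃ C > 0, ∀ A A₁ B V Z P Q W Y Y₁ : ℝ, 0 ≤ A → 0 ≤ A₁ → 0 ≤ B → 0 ≤ V → 0 ≤ Z → 0 ≤ P →
      0 ≤ Q → 0 ≤ Y → 0 ≤ Y₁ → W ≤ k * B + 2 * P →
      (c₁ * A + A₁) + (α₁ * B + ρ * Z + β * W + μ * Q) + (c₂ * Y + Y₁) ≤
        C * (A + A₁ + B + V + Z + P + Q + Y + Y₁) := by
  set M := max (max (max c₁ 1) (max (α₁ + β * k) ρ)) (max (max (2 * β) μ) c₂)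
  have hM : c₁ ≤ M ∧ 1 ≤ M ∧ α₁ + β * k ≤ M ∧ ρ ≤ M ∧ 2 * β ≤ M ∧ μ ≤ M ∧ c₂ ≤ M := by
    simp [M]
  obtain ⟨h₁, h₂, h₃, h₄, h₅, h₆, h₇⟩ := hM
  refine ⟨M, by linarith, fun A A₁ B V Z P Q W Y Y₁ hA hA₁ hB hV hZ hP hQ hY hY₁ hW => ?_⟩
  have hβW : β * W ≤ β * k * B + 2 * β * P := by nlinarith
  nlinarith

theorem stmt3_general (l₁ l₂ L c₁ c₂ ρ α β γ μ : ℝ)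
    (hl₁ : 0 < l₁) (hl₁₂ : l₁ < l₂) (hl₂L : l₂ < L)
    (hc₁ : 0 < c₁) (hc₂ : 0 < c₂) (hρ : 0 < ρ) (hβ : 0 < β)
    (hμ : 0 < μ) (hα₁ : 0 < α - γ ^ 2 * β) :
    ∃ C₁ > (0 : ℝ), ∃ C₂ > (0 : ℝ),
      ∀ u u' u1 v v' z p p' q y y' y1 : ℝ → ℂ,
        (∀ x ∈ Icc (0 : ℝ) l₁, HasDerivAt u (u' x) x) →
        ContinuousOn u' (Icc 0 l₁) →
        ContinuousOn u1 (Icc 0 l₁) →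
        (∀ x ∈ Icc l₁ l₂, HasDerivAt v (v' x) x) →
        ContinuousOn v' (Icc l₁ l₂) →
        ContinuousOn z (Icc l₁ l₂) →
        (∀ x ∈ Icc l₁ l₂, HasDerivAt p (p' x) x) →
        ContinuousOn p' (Icc l₁ l₂) →
        ContinuousOn q (Icc l₁ l₂) →
        (∀ x ∈ Icc l₂ L, HasDerivAt y (y' x) x) →
        ContinuousOn y' (Icc l₂ L) →
        ContinuousOn y1 (Icc l₂ L) →
        u 0 = 0 → y L = 0 → u l₁ = v l₁ → y l₂ = v l₂ →
        C₁ * ((∫ x in (0 : ℝ)..l₁, ‖u' x‖ ^ 2) + (∫ x in (0 : ℝ)..l₁, ‖u1 x‖ ^ 2) +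
            (∫ x in l₁..l₂, ‖v' x‖ ^ 2) + (∫ x in l₁..l₂, ‖v x‖ ^ 2) +
            (∫ x in l₁..l₂, ‖z x‖ ^ 2) + (∫ x in l₁..l₂, ‖p' x‖ ^ 2) +
            (∫ x in l₁..l₂, ‖q x‖ ^ 2) + (∫ x in l₂..L, ‖y' x‖ ^ 2) +
            (∫ x in l₂..L, ‖y1 x‖ ^ 2)) ≤
          ((∫ x in (0 : ℝ)..l₁, (c₁ * ‖u' x‖ ^ 2 + ‖u1 x‖ ^ 2)) +
            (∫ x in l₁..l₂, ((α - γ ^ 2 * β) * ‖v' x‖ ^ 2 + ρ * ‖z x‖ ^ 2 +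
              β * ‖(γ : ℂ) * v' x - p' x‖ ^ 2 + μ * ‖q x‖ ^ 2)) +
            (∫ x in l₂..L, (c₂ * ‖y' x‖ ^ 2 + ‖y1 x‖ ^ 2))) ∧
        ((∫ x in (0 : ℝ)..l₁, (c₁ * ‖u' x‖ ^ 2 + ‖u1 x‖ ^ 2)) +
            (∫ x in l₁..l₂, ((α - γ ^ 2 * β) * ‖v' x‖ ^ 2 + ρ * ‖z x‖ ^ 2 +
              β * ‖(γ : ℂ) * v' x - p' x‖ ^ 2 + μ * ‖q x‖ ^ 2)) +
            (∫ x in l₂..L, (c₂ * ‖y' x‖ ^ 2 + ‖y1 x‖ ^ 2))) ≤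
          C₂ * ((∫ x in (0 : ℝ)..l₁, ‖u' x‖ ^ 2) + (∫ x in (0 : ℝ)..l₁, ‖u1 x‖ ^ 2) +
            (∫ x in l₁..l₂, ‖v' x‖ ^ 2) + (∫ x in l₁..l₂, ‖v x‖ ^ 2) +
            (∫ x in l₁..l₂, ‖z x‖ ^ 2) + (∫ x in l₁..l₂, ‖p' x‖ ^ 2) +
            (∫ x in l₁..l₂, ‖q x‖ ^ 2) + (∫ x in l₂..L, ‖y' x‖ ^ 2) +
            (∫ x in l₂..L, ‖y1 x‖ ^ 2)) := by
  obtain ⟨C₁, hC₁, hlower⟩ := exists_pos_mul_le_energy hc₁ hc₂ hρ hα₁ hβ hμ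
    (k := 2 * γ ^ 2) (k₁ := 2 * (l₂ - l₁) * l₁) (k₂ := 2 * (l₂ - l₁) ^ 2) (by positivity)
    (mul_nonneg (by linarith) hl₁.le) (by positivity)
  obtain ⟨C₂, hC₂, hupper⟩ := exists_energy_le_mul (c₁ := c₁) (c₂ := c₂) (ρ := ρ)
    (α₁ := α - γ ^ 2 * β) (μ := μ) (k := 2 * γ ^ 2) hβ.le
  refine ⟨C₁, hC₁, C₂, hC₂, fun u u' u1 v v' z p p' q y y' y1 hu hu' hu1 hv hv' hz _ hp' hq _
    hy' hy1 hu0 _ huv _ => ?_⟩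
  have h0 : ∀ {a b : ℝ} {f : ℝ → ℂ}, a ≤ b → 0 ≤ ∫ x in a..b, ‖f x‖ ^ 2 :=
    fun hab => integral_nonneg hab fun _ _ => sq_nonneg _
  have hV := integral_norm_sq_le_of_clamped hl₁.le hl₁₂.le hu hu' hv hv' hu0 huv
  rw [sub_zero] at hV
  rw [integral_add, integral_add, integral_add, integral_add, integral_add]
  · simp only [integral_const_mul]
    exact ⟨hlower _ _ _ _ _ _ _ _ _ _ (h0 hl₁.le) (h0 hl₁.le) (h0 hl₁₂.le) (h0 hl₁₂.le)
        (h0 hl₁₂.le) (h0 hl₁₂.le) (h0 hl₂L.le) (h0 hl₂L.le) hV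
        (integral_norm_sq_le_of_ofReal_mul_sub γ hl₁₂.le hv' hp'),
      hupper _ _ _ _ _ _ _ _ _ _ (h0 hl₁.le) (h0 hl₁.le) (h0 hl₁₂.le) (h0 hl₁₂.le) (h0 hl₁₂.le)
        (h0 hl₁₂.le) (h0 hl₁₂.le) (h0 hl₂L.le) (h0 hl₂L.le)
        (integral_norm_ofReal_mul_sub_sq_le γ hl₁₂.le hv' hp')⟩
  all_goals exact ContinuousOn.intervalIntegrable_of_Icc (by linarith) (by fun_prop)

/-- (Lemma 2.2) Equivalence of the energy norm and the standard
norm on the energy space of the E/P/E system, for smooth representatives. -/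
theorem stmt3 (l₁ l₂ L c₁ c₂ ρ α β γ μ : ℝ)
    (hl₁ : 0 < l₁) (hl₁₂ : l₁ < l₂) (hl₂L : l₂ < L)
    (hc₁ : 0 < c₁) (hc₂ : 0 < c₂) (hρ : 0 < ρ) (hα : 0 < α) (hβ : 0 < β)
    (hγ : 0 < γ) (hμ : 0 < μ) (hα₁ : 0 < α - γ ^ 2 * β) :
    ∃ C₁ > (0 : ℝ), ∃ C₂ > (0 : ℝ),
      ∀ u u' u1 v v' z p p' q y y' y1 : ℝ → ℂ,
        (∀ x ∈ Icc (0 : ℝ) l₁, HasDerivAt u (u' x) x) →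
        ContinuousOn u' (Icc 0 l₁) →
        ContinuousOn u1 (Icc 0 l₁) →
        (∀ x ∈ Icc l₁ l₂, HasDerivAt v (v' x) x) →
        ContinuousOn v' (Icc l₁ l₂) →
        ContinuousOn z (Icc l₁ l₂) →
        (∀ x ∈ Icc l₁ l₂, HasDerivAt p (p' x) x) →
        ContinuousOn p' (Icc l₁ l₂) →
        ContinuousOn q (Icc l₁ l₂) →
        (∀ x ∈ Icc l₂ L, HasDerivAt y (y' x) x) →
        ContinuousOn y' (Icc l₂ L) →
        ContinuousOn y1 (Icc l₂ L) →
        u 0 = 0 → y L = 0 → u l₁ = v l₁ → y l₂ = v l₂ →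
        C₁ * ((∫ x in (0 : ℝ)..l₁, ‖u' x‖ ^ 2) + (∫ x in (0 : ℝ)..l₁, ‖u1 x‖ ^ 2) +
            (∫ x in l₁..l₂, ‖v' x‖ ^ 2) + (∫ x in l₁..l₂, ‖v x‖ ^ 2) +
            (∫ x in l₁..l₂, ‖z x‖ ^ 2) + (∫ x in l₁..l₂, ‖p' x‖ ^ 2) +
            (∫ x in l₁..l₂, ‖q x‖ ^ 2) + (∫ x in l₂..L, ‖y' x‖ ^ 2) +
            (∫ x in l₂..L, ‖y1 x‖ ^ 2)) ≤
          ((∫ x in (0 : ℝ)..l₁, (c₁ * ‖u' x‖ ^ 2 + ‖u1 x‖ ^ 2)) +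
            (∫ x in l₁..l₂, ((α - γ ^ 2 * β) * ‖v' x‖ ^ 2 + ρ * ‖z x‖ ^ 2 +
              β * ‖(γ : ℂ) * v' x - p' x‖ ^ 2 + μ * ‖q x‖ ^ 2)) +
            (∫ x in l₂..L, (c₂ * ‖y' x‖ ^ 2 + ‖y1 x‖ ^ 2))) ∧
        ((∫ x in (0 : ℝ)..l₁, (c₁ * ‖u' x‖ ^ 2 + ‖u1 x‖ ^ 2)) +
            (∫ x in l₁..l₂, ((α - γ ^ 2 * β) * ‖v' x‖ ^ 2 + ρ * ‖z x‖ ^ 2 +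
              β * ‖(γ : ℂ) * v' x - p' x‖ ^ 2 + μ * ‖q x‖ ^ 2)) +
            (∫ x in l₂..L, (c₂ * ‖y' x‖ ^ 2 + ‖y1 x‖ ^ 2))) ≤
          C₂ * ((∫ x in (0 : ℝ)..l₁, ‖u' x‖ ^ 2) + (∫ x in (0 : ℝ)..l₁, ‖u1 x‖ ^ 2) +
            (∫ x in l₁..l₂, ‖v' x‖ ^ 2) + (∫ x in l₁..l₂, ‖v x‖ ^ 2) +
            (∫ x in l₁..l₂, ‖z x‖ ^ 2) + (∫ x in l₁..l₂, ‖p' x‖ ^ 2) +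
            (∫ x in l₁..l₂, ‖q x‖ ^ 2) + (∫ x in l₂..L, ‖y' x‖ ^ 2) +
            (∫ x in l₂..L, ‖y1 x‖ ^ 2)) :=
  stmt3_general l₁ l₂ L c₁ c₂ ρ α β γ μ hl₁ hl₁₂ hl₂L hc₁ hc₂ hρ hβ hμ hα₁
end

section
/- Let ρ, α, β, γ, μ be positive reals with α₁ := α − γ²β > 0, let λ ≠ 0 be a real number, let I ⊆ ℝ be an interval, and let v, p : ℝ → ℂ be twice differentiable on I satisfying v″(x) = −(λ²/α₁)(ρ v(x) + γμ p(x)) and p″(x) = −(λ²/α₁)(γρ v(x) + (μα/β) p(x)) for all x ∈ I. Then v is four times differentiable on (the interior of) I and satisfies the fourth-order equation α₁β v⁗(x) + λ²(ρβ + μα) v″(x) + μρλ⁴ v(x) = 0 for all x in the interior of I. -/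
/-!
Writing the system as `v'' = a v + b p`, `p'' = c v + d p`, the right-hand side of the first
equation is differentiable twice, so `v'''' = a v'' + b p''`. Substituting the second equation
and eliminating `b p = v'' - a v` gives `v'''' = (a + d) v'' - (a d - b c) v`, the Cayley–Hamilton
relation of the coefficient matrix. For the P/E coefficients its trace and determinant are
`-λ²(ρβ + μα)/(α₁β)` and `μρλ⁴/(α₁β)`.
-/

open Set

section CoupledSystem

variable {𝕜 𝔸 : Type*} [NontriviallyNormedField 𝕜] [NormedCommRing 𝔸] [NormedAlgebra 𝕜 𝔸]

theorem HasDerivAt.const_mul_add_const_mul {f g : 𝕜 → 𝔸} {f' g' : 𝔸} {x : 𝕜} (a b : 𝔸)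
    (hf : HasDerivAt f f' x) (hg : HasDerivAt g g' x) :
    HasDerivAt (fun y => a * f y + b * g y) (a * f' + b * g') x :=
  (hf.const_mul a).add (hg.const_mul b)

theorem hasDerivAt_of_eqOn_const_mul_add_const_mul {U : Set 𝕜} (hU : IsOpen U)
    {w f g f' g' : 𝕜 → 𝔸} (a b : 𝔸)
    (hf : ∀ x ∈ U, HasDerivAt f (f' x) x) (hg : ∀ x ∈ U, HasDerivAt g (g' x) x)
    (hw : ∀ x ∈ U, w x = a * f x + b * g x) {x : 𝕜} (hx : x ∈ U) :
    HasDerivAt w (a * f' x + b * g' x) x := by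
  refine ((hf x hx).const_mul_add_const_mul a b (hg x hx)).congr_of_eventuallyEq ?_
  filter_upwards [hU.mem_nhds hx] with y hy
  exact hw y hy

theorem linear_system_elim {v v₂ p p₂ a b c d : 𝔸}
    (hv : v₂ = a * v + b * p) (hp : p₂ = c * v + d * p) :
    a * v₂ + b * p₂ = (a + d) * v₂ - (a * d - b * c) * v := by
  linear_combination (-d) * hv + b * hp

theorem exists_fourth_deriv_of_linear_system {U : Set 𝕜} (hU : IsOpen U)
    {v v' v'' p p' p'' : 𝕜 → 𝔸} (a b c d : 𝔸)
    (hv' : ∀ x ∈ U, HasDerivAt v (v' x) x) (hv'' : ∀ x ∈ U, HasDerivAt v' (v'' x) x)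
    (hp' : ∀ x ∈ U, HasDerivAt p (p' x) x) (hp'' : ∀ x ∈ U, HasDerivAt p' (p'' x) x)
    (hv : ∀ x ∈ U, v'' x = a * v x + b * p x) (hp : ∀ x ∈ U, p'' x = c * v x + d * p x) :
    ∃ v''' v'''' : 𝕜 → 𝔸,
      (∀ x ∈ U, HasDerivAt v'' (v''' x) x) ∧ (∀ x ∈ U, HasDerivAt v''' (v'''' x) x) ∧
      ∀ x ∈ U, v'''' x = (a + d) * v'' x - (a * d - b * c) * v x :=
  ⟨fun x => a * v' x + b * p' x, fun x => a * v'' x + b * p'' x,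
    fun _ hx => hasDerivAt_of_eqOn_const_mul_add_const_mul hU a b hv' hp' hv hx,
    fun x hx => (hv'' x hx).const_mul_add_const_mul a b (hp'' x hx),
    fun x hx => linear_system_elim (hv x hx) (hp x hx)⟩

end CoupledSystem

theorem stmt8_general (ρ α β γ μ : ℝ) (hβ : 0 < β)
    (hα₁ : 0 < α - γ ^ 2 * β)
    (lam : ℝ) (I : Set ℝ)
    (v v' v'' p p' p'' : ℝ → ℂ)
    (hv' : ∀ x ∈ I, HasDerivAt v (v' x) x)
    (hv'' : ∀ x ∈ I, HasDerivAt v' (v'' x) x)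
    (hp' : ∀ x ∈ I, HasDerivAt p (p' x) x)
    (hp'' : ∀ x ∈ I, HasDerivAt p' (p'' x) x)
    (heq1 : ∀ x ∈ I, v'' x =
      -((lam ^ 2 / (α - γ ^ 2 * β) : ℝ) : ℂ) * ((ρ : ℂ) * v x + ((γ * μ : ℝ) : ℂ) * p x))
    (heq2 : ∀ x ∈ I, p'' x =
      -((lam ^ 2 / (α - γ ^ 2 * β) : ℝ) : ℂ) *
        (((γ * ρ : ℝ) : ℂ) * v x + ((μ * α / β : ℝ) : ℂ) * p x)) :
    ∃ v''' v'''' : ℝ → ℂ,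
      (∀ x ∈ interior I, HasDerivAt v'' (v''' x) x) ∧
      (∀ x ∈ interior I, HasDerivAt v''' (v'''' x) x) ∧
      (∀ x ∈ interior I,
        (((α - γ ^ 2 * β) * β : ℝ) : ℂ) * v'''' x +
          ((lam ^ 2 * (ρ * β + μ * α) : ℝ) : ℂ) * v'' x +
          ((μ * ρ * lam ^ 4 : ℝ) : ℂ) * v x = 0) := by
  set k : ℂ := ((lam ^ 2 / (α - γ ^ 2 * β) : ℝ) : ℂ) with hk
  have hI : ∀ x ∈ interior I, x ∈ I := fun _ hx => interior_subset hx
  obtain ⟨v''', v'''', hv''', hv'''', hv_eq⟩ :=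
    exists_fourth_deriv_of_linear_system isOpen_interior
      (-k * ρ) (-k * ((γ * μ : ℝ) : ℂ)) (-k * ((γ * ρ : ℝ) : ℂ)) (-k * ((μ * α / β : ℝ) : ℂ))
      (fun x hx => hv' x (hI x hx)) (fun x hx => hv'' x (hI x hx))
      (fun x hx => hp' x (hI x hx)) (fun x hx => hp'' x (hI x hx))
      (fun x hx => by rw [heq1 x (hI x hx)]; ring) (fun x hx => by rw [heq2 x (hI x hx)]; ring)
  refine ⟨v''', v'''', hv''', hv'''', fun x hx => ?_⟩
  have hα₁c : ((α - γ ^ 2 * β : ℝ) : ℂ) ≠ 0 := by exact_mod_cast hα₁.ne'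
  have hβc : (β : ℂ) ≠ 0 := by exact_mod_cast hβ.ne'
  rw [hv_eq x hx, hk]
  push_cast at hα₁c ⊢
  field_simp
  ring

/-- From the reduced second-order coupled system (3.7), the
component `v` is four times differentiable on the interior of `I` and satisfies
the fourth-order equation (3.8). -/
theorem stmt8 (ρ α β γ μ : ℝ) (hρ : 0 < ρ) (hα : 0 < α) (hβ : 0 < β)
    (hγ : 0 < γ) (hμ : 0 < μ) (hα₁ : 0 < α - γ ^ 2 * β)
    (lam : ℝ) (hlam : lam ≠ 0) (I : Set ℝ) (hI : I.OrdConnected)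
    (v v' v'' p p' p'' : ℝ → ℂ)
    (hv' : ∀ x ∈ I, HasDerivAt v (v' x) x)
    (hv'' : ∀ x ∈ I, HasDerivAt v' (v'' x) x)
    (hp' : ∀ x ∈ I, HasDerivAt p (p' x) x)
    (hp'' : ∀ x ∈ I, HasDerivAt p' (p'' x) x)
    (heq1 : ∀ x ∈ I, v'' x =
      -((lam ^ 2 / (α - γ ^ 2 * β) : ℝ) : ℂ) * ((ρ : ℂ) * v x + ((γ * μ : ℝ) : ℂ) * p x))
    (heq2 : ∀ x ∈ I, p'' x =
      -((lam ^ 2 / (α - γ ^ 2 * β) : ℝ) : ℂ) *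
        (((γ * ρ : ℝ) : ℂ) * v x + ((μ * α / β : ℝ) : ℂ) * p x)) :
    ∃ v''' v'''' : ℝ → ℂ,
      (∀ x ∈ interior I, HasDerivAt v'' (v''' x) x) ∧
      (∀ x ∈ interior I, HasDerivAt v''' (v'''' x) x) ∧
      (∀ x ∈ interior I,
        (((α - γ ^ 2 * β) * β : ℝ) : ℂ) * v'''' x +
          ((lam ^ 2 * (ρ * β + μ * α) : ℝ) : ℂ) * v'' x +
          ((μ * ρ * lam ^ 4 : ℝ) : ℂ) * v x = 0) :=
  stmt8_general ρ α β γ μ hβ hα₁ lam I v v' v'' p p' p'' hv' hv'' hp' hp'' heq1 heq2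
end

section
/- Let ρ, α, β, γ, μ be positive reals with α₁ := α − γ²β > 0, let σ₊, σ₋ be as in equation (3.9) of the paper, let λ > 0 and l₁ > 0 be reals, and suppose that cos(λσ₊l₁) ≠ 0 or cos(λσ₋l₁) ≠ 0. Let v : ℝ → ℂ be four times continuously differentiable on [0, l₁] and satisfy α₁β v⁗(x) + λ²(ρβ + μα) v″(x) + μρλ⁴ v(x) = 0 for all x ∈ [0, l₁], together with the boundary conditions v(0) = 0, v″(0) = 0, v(l₁) = 0, v′(l₁) = 0, v‴(l₁) = 0. Then v(x) = 0 for all x ∈ [0, l₁]. -/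
open Set

/-!
With `k₊ = λσ₊`, `k₋ = λσ₋` (so that `α₁β (σ₊² + σ₋²) = ρβ + μα` and `α₁β σ₊²σ₋² = μρ`), the
equation factors as `(D² + k₊²)(D² + k₋²) v = 0`. Hence `u = v'' + k₋² v` solves `u'' = -k₊² u`
with `u(0) = 0`, `u'(l₁) = 0` and `u(l₁) = v''(l₁)`. For `u'' = -k² u` the quantities
`k cos(kx) u - sin(kx) u'` and `k sin(kx) u + cos(kx) u'` are conserved; they give
`k cos(k l₁) u(l₁) = k u(0) = 0`, so `v''(l₁) = 0` when `cos(k₊l₁) ≠ 0`, and then `u ≡ 0`.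
Thus `v'' = -k₋² v` with `v(0) = v(l₁) = v'(l₁) = 0`, which forces `v ≡ 0`.
The case `cos(k₋l₁) ≠ 0` is symmetric.
-/

theorem eq_left_of_hasDerivAt_zero {E : Type*} [NormedAddCommGroup E] [NormedSpace ℝ E]
    {f : ℝ → E} {a b : ℝ} (hf : ∀ x ∈ Icc a b, HasDerivAt f 0 x) :
    ∀ x ∈ Icc a b, f x = f a :=
  constant_of_has_deriv_right_zero
    (fun x hx => (hf x hx).continuousAt.continuousWithinAt)
    (fun x hx => (hf x (Ico_subset_Icc_self hx)).hasDerivWithinAt)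

theorem hasDerivAt_ofReal_cos_mul (k x : ℝ) :
    HasDerivAt (fun x : ℝ => (Real.cos (k * x) : ℂ)) (-(Real.sin (k * x) * k : ℝ)) x := by
  simpa using ((Real.hasDerivAt_cos (k * x)).comp x ((hasDerivAt_id x).const_mul k)).ofReal_comp

theorem hasDerivAt_ofReal_sin_mul (k x : ℝ) :
    HasDerivAt (fun x : ℝ => (Real.sin (k * x) : ℂ)) (Real.cos (k * x) * k : ℝ) x := by
  simpa using ((Real.hasDerivAt_sin (k * x)).comp x ((hasDerivAt_id x).const_mul k)).ofReal_comp

section Harmonic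

variable {k l : ℝ} {u u' : ℝ → ℂ}

theorem harmonic_cos_sub_sin_eq (hu : ∀ x ∈ Icc 0 l, HasDerivAt u (u' x) x)
    (hu' : ∀ x ∈ Icc 0 l, HasDerivAt u' (-(k : ℂ) ^ 2 * u x) x) :
    ∀ x ∈ Icc 0 l,
      k * Real.cos (k * x) * u x - Real.sin (k * x) * u' x = k * u 0 := by
  have hconst := eq_left_of_hasDerivAt_zero (f := fun x : ℝ =>
      k * Real.cos (k * x) * u x - Real.sin (k * x) * u' x) fun x hx => by
    refine ((((hasDerivAt_ofReal_cos_mul k x).const_mul (k : ℂ)).mul (hu x hx)).sub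
      ((hasDerivAt_ofReal_sin_mul k x).mul (hu' x hx))).congr_deriv ?_
    push_cast
    ring
  simpa using hconst

theorem harmonic_sin_add_cos_eq (hu : ∀ x ∈ Icc 0 l, HasDerivAt u (u' x) x)
    (hu' : ∀ x ∈ Icc 0 l, HasDerivAt u' (-(k : ℂ) ^ 2 * u x) x) :
    ∀ x ∈ Icc 0 l,
      k * Real.sin (k * x) * u x + Real.cos (k * x) * u' x = u' 0 := by
  have hconst := eq_left_of_hasDerivAt_zero (f := fun x : ℝ =>
      k * Real.sin (k * x) * u x + Real.cos (k * x) * u' x) fun x hx => by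
    refine ((((hasDerivAt_ofReal_sin_mul k x).const_mul (k : ℂ)).mul (hu x hx)).add
      ((hasDerivAt_ofReal_cos_mul k x).mul (hu' x hx))).congr_deriv ?_
    push_cast
    ring
  simpa using hconst

theorem harmonic_eq_zero_of_initial (hk : k ≠ 0) (hu : ∀ x ∈ Icc 0 l, HasDerivAt u (u' x) x)
    (hu' : ∀ x ∈ Icc 0 l, HasDerivAt u' (-(k : ℂ) ^ 2 * u x) x)
    (h₀ : u 0 = 0) (h₀' : u' 0 = 0) : ∀ x ∈ Icc 0 l, u x = 0 := by
  intro x hx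
  have hP := harmonic_cos_sub_sin_eq hu hu' x hx
  have hQ := harmonic_sin_add_cos_eq hu hu' x hx
  have hpyth : (Real.cos (k * x) : ℂ) ^ 2 + (Real.sin (k * x) : ℂ) ^ 2 = 1 := by
    exact_mod_cast Real.cos_sq_add_sin_sq (k * x)
  have hku : (k : ℂ) * u x = 0 := by
    rw [h₀, mul_zero] at hP
    rw [h₀'] at hQ
    linear_combination Real.cos (k * x) * hP + Real.sin (k * x) * hQ - k * u x * hpyth
  exact (mul_eq_zero.mp hku).resolve_left (by exact_mod_cast hk)

theorem harmonic_eq_zero_of_boundary (hk : k ≠ 0) (hl : 0 ≤ l)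
    (hu : ∀ x ∈ Icc 0 l, HasDerivAt u (u' x) x)
    (hu' : ∀ x ∈ Icc 0 l, HasDerivAt u' (-(k : ℂ) ^ 2 * u x) x)
    (h₀ : u 0 = 0) (hl₀ : u l = 0) (hl₀' : u' l = 0) : ∀ x ∈ Icc 0 l, u x = 0 := by
  refine harmonic_eq_zero_of_initial hk hu hu' h₀ ?_
  simpa [hl₀, hl₀'] using (harmonic_sin_add_cos_eq hu hu' l ⟨hl, le_rfl⟩).symm

theorem harmonic_apply_eq_zero_of_cos_ne_zero (hk : k ≠ 0) (hl : 0 ≤ l)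
    (hcos : Real.cos (k * l) ≠ 0) (hu : ∀ x ∈ Icc 0 l, HasDerivAt u (u' x) x)
    (hu' : ∀ x ∈ Icc 0 l, HasDerivAt u' (-(k : ℂ) ^ 2 * u x) x)
    (h₀ : u 0 = 0) (hl₀' : u' l = 0) : u l = 0 := by
  have hP := harmonic_cos_sub_sin_eq hu hu' l ⟨hl, le_rfl⟩
  rw [h₀, hl₀', mul_zero, mul_zero, sub_zero] at hP
  have hkcos : (k : ℂ) * Real.cos (k * l) ≠ 0 := by exact_mod_cast mul_ne_zero hk hcos
  exact (mul_eq_zero.mp hP).resolve_left hkcos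

end Harmonic

section FourthOrder

variable {p q l : ℝ} {v v₁ v₂ v₃ v₄ : ℝ → ℂ}

theorem fourth_order_eq_zero_of_cos_ne_zero (hp : p ≠ 0) (hq : q ≠ 0) (hl : 0 ≤ l)
    (hcos : Real.cos (p * l) ≠ 0)
    (hv₁ : ∀ x ∈ Icc 0 l, HasDerivAt v (v₁ x) x) (hv₂ : ∀ x ∈ Icc 0 l, HasDerivAt v₁ (v₂ x) x)
    (hv₃ : ∀ x ∈ Icc 0 l, HasDerivAt v₂ (v₃ x) x) (hv₄ : ∀ x ∈ Icc 0 l, HasDerivAt v₃ (v₄ x) x)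
    (hode : ∀ x ∈ Icc 0 l,
      v₄ x + ((p ^ 2 + q ^ 2 : ℝ) : ℂ) * v₂ x + ((p ^ 2 * q ^ 2 : ℝ) : ℂ) * v x = 0)
    (h₀ : v 0 = 0) (h₀'' : v₂ 0 = 0) (hl₀ : v l = 0) (hl₀' : v₁ l = 0) (hl₀''' : v₃ l = 0) :
    ∀ x ∈ Icc 0 l, v x = 0 := by
  set u : ℝ → ℂ := fun x => v₂ x + (q : ℂ) ^ 2 * v x
  have hu : ∀ x ∈ Icc 0 l, HasDerivAt u (v₃ x + (q : ℂ) ^ 2 * v₁ x) x := fun x hx =>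
    (hv₃ x hx).add ((hv₁ x hx).const_mul _)
  have hu' : ∀ x ∈ Icc 0 l,
      HasDerivAt (fun x => v₃ x + (q : ℂ) ^ 2 * v₁ x) (-(p : ℂ) ^ 2 * u x) x := fun x hx =>
    ((hv₄ x hx).add ((hv₂ x hx).const_mul _)).congr_deriv <| by
      have h := hode x hx
      push_cast at h
      linear_combination h
  have hu₀ : u 0 = 0 := by simp [u, h₀, h₀'']
  have hul : u l = 0 :=
    harmonic_apply_eq_zero_of_cos_ne_zero hp hl hcos hu hu' hu₀ (by simp [hl₀', hl₀'''])
  have hu_zero := harmonic_eq_zero_of_boundary hp hl hu hu' hu₀ hul (by simp [hl₀', hl₀'''])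
  have hv₂' : ∀ x ∈ Icc 0 l, HasDerivAt v₁ (-(q : ℂ) ^ 2 * v x) x := fun x hx =>
    (hv₂ x hx).congr_deriv (by linear_combination hu_zero x hx)
  exact harmonic_eq_zero_of_boundary hq hl hv₁ hv₂' h₀ hl₀ hl₀'

theorem fourth_order_eq_zero_of_cos_ne_zero_or (hp : p ≠ 0) (hq : q ≠ 0) (hl : 0 ≤ l)
    (hcos : Real.cos (p * l) ≠ 0 ∨ Real.cos (q * l) ≠ 0)
    (hv₁ : ∀ x ∈ Icc 0 l, HasDerivAt v (v₁ x) x) (hv₂ : ∀ x ∈ Icc 0 l, HasDerivAt v₁ (v₂ x) x)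
    (hv₃ : ∀ x ∈ Icc 0 l, HasDerivAt v₂ (v₃ x) x) (hv₄ : ∀ x ∈ Icc 0 l, HasDerivAt v₃ (v₄ x) x)
    (hode : ∀ x ∈ Icc 0 l,
      v₄ x + ((p ^ 2 + q ^ 2 : ℝ) : ℂ) * v₂ x + ((p ^ 2 * q ^ 2 : ℝ) : ℂ) * v x = 0)
    (h₀ : v 0 = 0) (h₀'' : v₂ 0 = 0) (hl₀ : v l = 0) (hl₀' : v₁ l = 0) (hl₀''' : v₃ l = 0) :
    ∀ x ∈ Icc 0 l, v x = 0 := by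
  rcases hcos with hcos | hcos
  · exact fourth_order_eq_zero_of_cos_ne_zero hp hq hl hcos hv₁ hv₂ hv₃ hv₄ hode
      h₀ h₀'' hl₀ hl₀' hl₀'''
  · refine fourth_order_eq_zero_of_cos_ne_zero hq hp hl hcos hv₁ hv₂ hv₃ hv₄ ?_
      h₀ h₀'' hl₀ hl₀' hl₀'''
    simpa only [add_comm (q ^ 2), mul_comm (q ^ 2)] using hode

end FourthOrder

theorem quadratic_roots_vieta {a b c s : ℝ} (ha : a ≠ 0) (hs : s ^ 2 = b ^ 2 - 4 * a * c) :
    a * ((b + s) / (2 * a) + (b - s) / (2 * a)) = b ∧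
      a * ((b + s) / (2 * a) * ((b - s) / (2 * a))) = c := by
  constructor
  · field_simp
    ring
  · rw [div_mul_div_comm, mul_div_assoc', div_eq_iff (by positivity)]
    linear_combination -a * hs

theorem quadratic_root_sub_pos {a b c s : ℝ} (ha : 0 < a) (hb : 0 < b) (hc : 0 < c)
    (hs₀ : 0 ≤ s) (hs : s ^ 2 = b ^ 2 - 4 * a * c) : 0 < (b - s) / (2 * a) := by
  have : s < b := by nlinarith [mul_pos ha hc]
  exact div_pos (by linarith) (by linarith)

theorem stmt11_general (ρ α β γ μ : ℝ) (hρ : 0 < ρ) (hα : 0 < α) (hβ : 0 < β)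
    (hμ : 0 < μ) (hα₁ : 0 < α - γ ^ 2 * β)
    (σp σm : ℝ)
    (hσp : σp = Real.sqrt (((ρ * β + μ * α) +
      Real.sqrt ((ρ * β - μ * α) ^ 2 + 4 * γ ^ 2 * β ^ 2 * μ * ρ)) /
        (2 * β * (α - γ ^ 2 * β))))
    (hσm : σm = Real.sqrt (((ρ * β + μ * α) -
      Real.sqrt ((ρ * β - μ * α) ^ 2 + 4 * γ ^ 2 * β ^ 2 * μ * ρ)) /
        (2 * β * (α - γ ^ 2 * β))))
    (lam l₁ : ℝ) (hlam : 0 < lam) (hl₁ : 0 < l₁)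
    (hcos : Real.cos (lam * σp * l₁) ≠ 0 ∨ Real.cos (lam * σm * l₁) ≠ 0)
    (v v1 v2 v3 v4 : ℝ → ℂ)
    (hv1 : ∀ x ∈ Icc (0 : ℝ) l₁, HasDerivAt v (v1 x) x)
    (hv2 : ∀ x ∈ Icc (0 : ℝ) l₁, HasDerivAt v1 (v2 x) x)
    (hv3 : ∀ x ∈ Icc (0 : ℝ) l₁, HasDerivAt v2 (v3 x) x)
    (hv4 : ∀ x ∈ Icc (0 : ℝ) l₁, HasDerivAt v3 (v4 x) x)
    (hode : ∀ x ∈ Icc (0 : ℝ) l₁,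
      (((α - γ ^ 2 * β) * β : ℝ) : ℂ) * v4 x +
        ((lam ^ 2 * (ρ * β + μ * α) : ℝ) : ℂ) * v2 x +
        ((μ * ρ * lam ^ 4 : ℝ) : ℂ) * v x = 0)
    (hbc0 : v 0 = 0) (hbc1 : v2 0 = 0) (hbc2 : v l₁ = 0)
    (hbc3 : v1 l₁ = 0) (hbc4 : v3 l₁ = 0) :
    ∀ x ∈ Icc (0 : ℝ) l₁, v x = 0 := by
  set a := (α - γ ^ 2 * β) * β
  set b := ρ * β + μ * α
  set s := Real.sqrt ((ρ * β - μ * α) ^ 2 + 4 * γ ^ 2 * β ^ 2 * μ * ρ)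
  have ha : 0 < a := by positivity
  have hs : s ^ 2 = b ^ 2 - 4 * a * (μ * ρ) := by
    rw [Real.sq_sqrt (by positivity)]
    ring
  have h2a : 2 * β * (α - γ ^ 2 * β) = 2 * a := by ring
  rw [h2a] at hσp hσm
  have hm := quadratic_root_sub_pos ha (by positivity) (by positivity) (Real.sqrt_nonneg _) hs
  have hσp2 : σp ^ 2 = (b + s) / (2 * a) := hσp ▸ Real.sq_sqrt (by positivity)
  have hσm2 : σm ^ 2 = (b - s) / (2 * a) := hσm ▸ Real.sq_sqrt hm.le
  obtain ⟨hsum, hprod⟩ := quadratic_roots_vieta ha.ne' hs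
  rw [← hσp2, ← hσm2] at hsum hprod
  have hp : lam * σp ≠ 0 := (mul_pos hlam (hσp ▸ Real.sqrt_pos.mpr (by positivity))).ne'
  have hq : lam * σm ≠ 0 := (mul_pos hlam (hσm ▸ Real.sqrt_pos.mpr hm)).ne'
  refine fourth_order_eq_zero_of_cos_ne_zero_or hp hq hl₁.le hcos hv1 hv2 hv3 hv4
    (fun x hx => ?_) hbc0 hbc1 hbc2 hbc3 hbc4
  have hlam2 : lam ^ 2 * b = a * ((lam * σp) ^ 2 + (lam * σm) ^ 2) := by
    linear_combination -lam ^ 2 * hsum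
  have hlam4 : μ * ρ * lam ^ 4 = a * ((lam * σp) ^ 2 * (lam * σm) ^ 2) := by
    linear_combination -lam ^ 4 * hprod
  rw [hlam2, hlam4] at hode
  refine (mul_eq_zero.mp ?_).resolve_left (Complex.ofReal_ne_zero.mpr ha.ne')
  have hx := hode x hx
  push_cast at hx ⊢
  linear_combination hx

/-- Uniqueness for the fourth-order boundary value problem
(equations (3.8)–(3.12)): if at least one of `cos(λσ₊l₁)`, `cos(λσ₋l₁)` is
nonzero, then the only solution is the trivial one. -/
theorem stmt11 (ρ α β γ μ : ℝ) (hρ : 0 < ρ) (hα : 0 < α) (hβ : 0 < β)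
    (hγ : 0 < γ) (hμ : 0 < μ) (hα₁ : 0 < α - γ ^ 2 * β)
    (σp σm : ℝ)
    (hσp : σp = Real.sqrt (((ρ * β + μ * α) +
      Real.sqrt ((ρ * β - μ * α) ^ 2 + 4 * γ ^ 2 * β ^ 2 * μ * ρ)) /
        (2 * β * (α - γ ^ 2 * β))))
    (hσm : σm = Real.sqrt (((ρ * β + μ * α) -
      Real.sqrt ((ρ * β - μ * α) ^ 2 + 4 * γ ^ 2 * β ^ 2 * μ * ρ)) /
        (2 * β * (α - γ ^ 2 * β))))
    (lam l₁ : ℝ) (hlam : 0 < lam) (hl₁ : 0 < l₁)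
    (hcos : Real.cos (lam * σp * l₁) ≠ 0 ∨ Real.cos (lam * σm * l₁) ≠ 0)
    (v v1 v2 v3 v4 : ℝ → ℂ)
    (hv1 : ∀ x ∈ Icc (0 : ℝ) l₁, HasDerivAt v (v1 x) x)
    (hv2 : ∀ x ∈ Icc (0 : ℝ) l₁, HasDerivAt v1 (v2 x) x)
    (hv3 : ∀ x ∈ Icc (0 : ℝ) l₁, HasDerivAt v2 (v3 x) x)
    (hv4 : ∀ x ∈ Icc (0 : ℝ) l₁, HasDerivAt v3 (v4 x) x)
    (hc0 : ContinuousOn v (Icc 0 l₁)) (hc1 : ContinuousOn v1 (Icc 0 l₁))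
    (hc2 : ContinuousOn v2 (Icc 0 l₁)) (hc3 : ContinuousOn v3 (Icc 0 l₁))
    (hc4 : ContinuousOn v4 (Icc 0 l₁))
    (hode : ∀ x ∈ Icc (0 : ℝ) l₁,
      (((α - γ ^ 2 * β) * β : ℝ) : ℂ) * v4 x +
        ((lam ^ 2 * (ρ * β + μ * α) : ℝ) : ℂ) * v2 x +
        ((μ * ρ * lam ^ 4 : ℝ) : ℂ) * v x = 0)
    (hbc0 : v 0 = 0) (hbc1 : v2 0 = 0) (hbc2 : v l₁ = 0)
    (hbc3 : v1 l₁ = 0) (hbc4 : v3 l₁ = 0) :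
    ∀ x ∈ Icc (0 : ℝ) l₁, v x = 0 :=
  stmt11_general ρ α β γ μ hρ hα hβ hμ hα₁ σp σm hσp hσm lam l₁ hlam hl₁ hcos v v1 v2 v3 v4 hv1 hv2
    hv3 hv4 hode hbc0 hbc1 hbc2 hbc3 hbc4
end

section
/- Let ρ, α, β, γ, μ be positive reals with α₁ := α − γ²β > 0, let σ₊, σ₋ be as in equation (3.9) of the paper, and let λ ≠ 0 be a real number. Consider the 4×4 complex matrix N = [[0, 1, 0, 0], [−λ²ρ/α₁, 0, −λ²γμ/α₁, 0], [0, 0, 0, 1], [−λ²ργ/α₁, 0, −λ²μα/(α₁β), 0]]. Then the characteristic polynomial of N equals X⁴ + (λ²(ρβ + μα)/(α₁β))X² + μρλ⁴/(α₁β), and the set of eigenvalues of N is exactly {iλσ₊, −iλσ₊, iλσ₋, −iλσ₋}, consisting of four distinct purely imaginary numbers. -/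
/-!
Expanding along the first row, `det (X - N) = X⁴ + B X² + C` with `α₁β B = λ²(ρβ + μα)` and
`α₁β C = λ⁴μρ`. As `(ρβ - μα)² + 4γ²β²μρ = P² - 4AQ` for `A = α₁β`, `P = ρβ + μα`, `Q = μρ`, the
numbers `σ±²` are the roots of `A t² - P t + Q`, so by Vieta `B = λ²(σ₊² + σ₋²)`,
`C = λ⁴σ₊²σ₋²`, and the characteristic polynomial is `(X² + λ²σ₊²)(X² + λ²σ₋²)`. Since
`0 < 4AQ < P²`, both roots are positive and distinct, so `0 < σ₋ < σ₊` and the four eigenvalues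
`±iλσ±` are distinct.
-/

open Polynomial Complex

theorem Matrix.charpoly_secondOrderSystem {R : Type*} [CommRing R] (a b c d : R) :
    (!![0, 1, 0, 0; a, 0, b, 0; 0, 0, 0, 1; c, 0, d, 0] : Matrix (Fin 4) (Fin 4) R).charpoly =
      X ^ 4 - C (a + d) * X ^ 2 + C (a * d - b * c) := by
  simp [Matrix.charpoly, Matrix.det_succ_row_zero, Fin.sum_univ_succ, Fin.succAbove]
  ring

theorem biquadratic_eq_zero_iff (x y z : ℂ) :
    z ^ 4 + (x ^ 2 + y ^ 2) * z ^ 2 + x ^ 2 * y ^ 2 = 0 ↔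
      z = I * x ∨ z = -(I * x) ∨ z = I * y ∨ z = -(I * y) := by
  have factor : z ^ 4 + (x ^ 2 + y ^ 2) * z ^ 2 + x ^ 2 * y ^ 2 =
      (z - I * x) * (z + I * x) * ((z - I * y) * (z + I * y)) := by
    linear_combination ((x ^ 2 + y ^ 2) * z ^ 2 + (1 - I ^ 2) * x ^ 2 * y ^ 2) * I_sq
  simp only [factor, mul_eq_zero, sub_eq_zero, add_eq_zero_iff_eq_neg, or_assoc]

theorem Matrix.spectrum_eq_of_charpoly_eq_biquadratic {n : Type*} [Fintype n] [DecidableEq n]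
    {M : Matrix n n ℂ} {x y : ℂ}
    (h : M.charpoly = X ^ 4 + C (x ^ 2 + y ^ 2) * X ^ 2 + C (x ^ 2 * y ^ 2)) :
    spectrum ℂ M = {I * x, -(I * x), I * y, -(I * y)} := by
  ext z
  simp [Matrix.mem_spectrum_iff_isRoot_charpoly, h, biquadratic_eq_zero_iff]

theorem I_mul_ofReal_pairwise_ne {x y : ℝ} (hy : y ≠ 0) (hyx : y ^ 2 < x ^ 2) :
    I * x ≠ -(I * x) ∧ I * x ≠ I * y ∧ I * x ≠ -(I * y) ∧
      -(I * x) ≠ I * y ∧ -(I * x) ≠ -(I * y) ∧ I * y ≠ -(I * y) := by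
  have hx : x ≠ 0 := by rintro rfl; nlinarith [sq_nonneg y]
  have hxy : x ≠ y := by rintro rfl; exact lt_irrefl _ hyx
  have hxy' : x ≠ -y := by rintro rfl; simp at hyx
  simp [Complex.ext_iff, hx, hy, hxy, hxy', neg_eq_iff_eq_neg, self_eq_neg]

theorem vieta_sqrt_quadratic_roots {A P Q σp σm : ℝ} (hA : 0 < A) (hP : 0 < P) (hQ : 0 < Q)
    (hD : 4 * A * Q < P ^ 2)
    (hσp : σp = √((P + √(P ^ 2 - 4 * A * Q)) / (2 * A)))
    (hσm : σm = √((P - √(P ^ 2 - 4 * A * Q)) / (2 * A))) :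
    σp ^ 2 + σm ^ 2 = P / A ∧ σp ^ 2 * σm ^ 2 = Q / A ∧ 0 < σm ∧ σm < σp := by
  set s := √(P ^ 2 - 4 * A * Q)
  have hs : s ^ 2 = P ^ 2 - 4 * A * Q := Real.sq_sqrt (by linarith)
  have hs0 : 0 < s := Real.sqrt_pos.mpr (by linarith)
  have hsP : s < P := by nlinarith
  have hm : 0 < (P - s) / (2 * A) := by apply div_pos <;> linarith
  have hσp2 : σp ^ 2 = (P + s) / (2 * A) := by rw [hσp]; exact Real.sq_sqrt (by positivity)
  have hσm2 : σm ^ 2 = (P - s) / (2 * A) := by rw [hσm]; exact Real.sq_sqrt hm.le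
  refine ⟨?_, ?_, hσm ▸ Real.sqrt_pos.mpr hm, ?_⟩
  · rw [hσp2, hσm2]; field_simp; ring
  · rw [hσp2, hσm2]; field_simp; linear_combination (-1) * hs
  · rw [hσp, hσm]; gcongr; linarith

/-- The first-order system matrix `N = N^{PE}` (equation
(3.38)) has characteristic polynomial
`X⁴ + (λ²(ρβ+μα)/(α₁β)) X² + μρλ⁴/(α₁β)` and its eigenvalues are exactly the
four distinct purely imaginary numbers `±iλσ₊`, `±iλσ₋`. -/
theorem stmt13 (ρ α β γ μ : ℝ) (hρ : 0 < ρ) (hα : 0 < α) (hβ : 0 < β)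
    (hγ : 0 < γ) (hμ : 0 < μ) (hα₁ : 0 < α - γ ^ 2 * β)
    (σp σm : ℝ)
    (hσp : σp = Real.sqrt (((ρ * β + μ * α) +
      Real.sqrt ((ρ * β - μ * α) ^ 2 + 4 * γ ^ 2 * β ^ 2 * μ * ρ)) /
        (2 * β * (α - γ ^ 2 * β))))
    (hσm : σm = Real.sqrt (((ρ * β + μ * α) -
      Real.sqrt ((ρ * β - μ * α) ^ 2 + 4 * γ ^ 2 * β ^ 2 * μ * ρ)) /
        (2 * β * (α - γ ^ 2 * β))))
    (lam : ℝ) (hlam : lam ≠ 0)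
    (N : Matrix (Fin 4) (Fin 4) ℂ)
    (hN : N = !![0, 1, 0, 0;
      ((-(lam ^ 2 * ρ / (α - γ ^ 2 * β)) : ℝ) : ℂ), 0,
        ((-(lam ^ 2 * γ * μ / (α - γ ^ 2 * β)) : ℝ) : ℂ), 0;
      0, 0, 0, 1;
      ((-(lam ^ 2 * ρ * γ / (α - γ ^ 2 * β)) : ℝ) : ℂ), 0,
        ((-(lam ^ 2 * μ * α / ((α - γ ^ 2 * β) * β)) : ℝ) : ℂ), 0]) :
    N.charpoly = X ^ 4 +
      C ((lam ^ 2 * (ρ * β + μ * α) / ((α - γ ^ 2 * β) * β) : ℝ) : ℂ) * X ^ 2 +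
      C ((μ * ρ * lam ^ 4 / ((α - γ ^ 2 * β) * β) : ℝ) : ℂ) ∧
    spectrum ℂ N = {Complex.I * (lam * σp : ℝ), -(Complex.I * (lam * σp : ℝ)),
      Complex.I * (lam * σm : ℝ), -(Complex.I * (lam * σm : ℝ))} ∧
    (Complex.I * (lam * σp : ℝ) ≠ -(Complex.I * (lam * σp : ℝ)) ∧
     Complex.I * (lam * σp : ℝ) ≠ Complex.I * (lam * σm : ℝ) ∧
     Complex.I * (lam * σp : ℝ) ≠ -(Complex.I * (lam * σm : ℝ)) ∧
     -(Complex.I * (lam * σp : ℝ)) ≠ Complex.I * (lam * σm : ℝ) ∧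
     -(Complex.I * (lam * σp : ℝ)) ≠ -(Complex.I * (lam * σm : ℝ)) ∧
     Complex.I * (lam * σm : ℝ) ≠ -(Complex.I * (lam * σm : ℝ))) ∧
    (∀ z ∈ spectrum ℂ N, z.re = 0) := by
  have hα₁β : 0 < β * (α - γ ^ 2 * β) := by positivity
  have hdisc : (ρ * β - μ * α) ^ 2 + 4 * γ ^ 2 * β ^ 2 * μ * ρ =
      (ρ * β + μ * α) ^ 2 - 4 * (β * (α - γ ^ 2 * β)) * (μ * ρ) := by ring
  obtain ⟨hsum, hprod, hσm_pos, hσm_lt⟩ := vieta_sqrt_quadratic_roots (P := ρ * β + μ * α)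
    (Q := μ * ρ) (σp := σp) (σm := σm) hα₁β (by positivity) (by positivity)
    (by rw [← sub_pos, ← hdisc]; positivity) (by rw [hσp, hdisc]; ring_nf)
    (by rw [hσm, hdisc]; ring_nf)
  have hcharpoly : N.charpoly = X ^ 4 +
      C ((lam ^ 2 * (ρ * β + μ * α) / ((α - γ ^ 2 * β) * β) : ℝ) : ℂ) * X ^ 2 +
      C ((μ * ρ * lam ^ 4 / ((α - γ ^ 2 * β) * β) : ℝ) : ℂ) := by
    have hB : -(-(lam ^ 2 * ρ / (α - γ ^ 2 * β)) + -(lam ^ 2 * μ * α / ((α - γ ^ 2 * β) * β))) =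
        lam ^ 2 * (ρ * β + μ * α) / ((α - γ ^ 2 * β) * β) := by
      field_simp; ring
    have hC : -(lam ^ 2 * ρ / (α - γ ^ 2 * β)) * -(lam ^ 2 * μ * α / ((α - γ ^ 2 * β) * β)) -
          -(lam ^ 2 * γ * μ / (α - γ ^ 2 * β)) * -(lam ^ 2 * ρ * γ / (α - γ ^ 2 * β)) =
        μ * ρ * lam ^ 4 / ((α - γ ^ 2 * β) * β) := by
      field_simp
    rw [hN, Matrix.charpoly_secondOrderSystem, ← hB, ← hC]
    simp only [ofReal_neg, ofReal_add, ofReal_sub, ofReal_mul, map_neg, map_add, map_sub,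
      map_mul]
    ring
  have hB : lam ^ 2 * (ρ * β + μ * α) / ((α - γ ^ 2 * β) * β) =
      (lam * σp) ^ 2 + (lam * σm) ^ 2 := by
    rw [mul_pow, mul_pow, ← mul_add, hsum]; ring
  have hC : μ * ρ * lam ^ 4 / ((α - γ ^ 2 * β) * β) = (lam * σp) ^ 2 * (lam * σm) ^ 2 := by
    rw [mul_pow, mul_pow, mul_mul_mul_comm, hprod]; ring
  have hspec := Matrix.spectrum_eq_of_charpoly_eq_biquadratic
    (x := ((lam * σp : ℝ) : ℂ)) (y := ((lam * σm : ℝ) : ℂ)) <| by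
      rw [hcharpoly, hB, hC]; push_cast; rfl
  refine ⟨hcharpoly, hspec, I_mul_ofReal_pairwise_ne (mul_ne_zero hlam hσm_pos.ne') ?_, ?_⟩
  · rw [mul_pow, mul_pow]
    gcongr
  · rw [hspec]
    rintro z (rfl | rfl | rfl | rfl) <;> simp
end
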